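/- arXiv:2205.14545 — 3 statements merged into one kernel-verified Lean document; each statement's English description precedes it below -/
import Mathlib

section
/- The loss L(θ;σ) := Σ_{j=1}^n ‖I_{y^{(j)}}(·) − Ψ_j(θ,·)‖²_{L²(S,𝔪)} + Σ_{i=1}^∞ |⟨e_i,θ⟩|²/σ_i² admits a unique minimizer over H_{σ,e}, and this minimizer equals θ̂_σ = U_{n,σ}^{−1}( Σ_{j=1}^n ∫_S I_{y^{(j)}}(t) Φ_j(·,t) 𝔪(dt) ); that is, L(θ;σ) > L(θ̂_σ;σ) for every θ ∈ H_{σ,e} with θ ≠ θ̂_σ. -/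
open MeasureTheory ProbabilityTheory Finset
open scoped RealInnerProductSpace

set_option maxHeartbeats 1000000

noncomputable section

lemma aux_integrable_prod_of_bound {α β : Type*} [MeasurableSpace α] [MeasurableSpace β]
    (μ : Measure α) (κ : Measure β) [SFinite κ] [IsFiniteMeasure κ]
    {F : α × β → ℝ} (hF : AEStronglyMeasurable F (μ.prod κ))
    {g : α → ℝ} (hg : Integrable g μ) (hb : ∀ᵐ z ∂(μ.prod κ), ‖F z‖ ≤ g z.1) :
    Integrable F (μ.prod κ) := by
  rw [integrable_prod_iff hF]
  have hsec := hF.prodMk_left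
  have hb' := Measure.ae_ae_of_ae_prod hb
  constructor
  · filter_upwards [hsec, hb'] with x hx hbx
    exact Integrable.mono' (integrable_const (g x)) hx hbx
  · have hmeas : AEStronglyMeasurable (fun x => ∫ y, ‖F (x, y)‖ ∂κ) μ :=
      hF.norm.integral_prod_right'
    refine Integrable.mono' (hg.abs.const_mul (κ Set.univ).toReal) hmeas ?_
    filter_upwards [hsec, hb'] with x hx hbx
    rw [Real.norm_eq_abs, abs_of_nonneg (integral_nonneg fun y => norm_nonneg _)]
    calc ∫ y, ‖F (x, y)‖ ∂κ ≤ ∫ _, g x ∂κ := by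
          refine integral_mono_ae (Integrable.mono' (integrable_const (g x)) hx.norm ?_)
            (integrable_const _) hbx
          filter_upwards [hbx] with y hy
          simpa using hy
        _ = (κ Set.univ).toReal * g x := by rw [integral_const]; simp [smul_eq_mul, Measure.real]
        _ ≤ (κ Set.univ).toReal * |g x| :=
          mul_le_mul_of_nonneg_left (le_abs_self _) ENNReal.toReal_nonneg

/-- **Proposition (the regularized loss admits a unique minimizer, given by
`θ̂_σ = U_{n,σ}⁻¹(∑_j ∫_S I_{y_j} Φ_j dm)`).** -/
theorem loss_unique_minimizer_infinite_dimensional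
    {X : Type*} [TopologicalSpace X] [PolishSpace X] [MeasurableSpace X] [BorelSpace X]
    {Ω : Type*} [MeasurableSpace Ω] (nu : Measure Ω) [IsFiniteMeasure nu]
    (S : Set ℝ) (hS : MeasurableSet S)
    (m : Measure ℝ) [IsProbabilityMeasure m] (hmS : m Sᶜ = 0)
    (Φ : X → Ω → ℝ → ℝ)
    (hΦmeas : Measurable fun p : X × Ω × ℝ => Φ p.1 p.2.1 p.2.2)
    (hΦ01 : ∀ (x : X) (ω : Ω) (t : ℝ), Φ x ω t ∈ Set.Icc (0:ℝ) 1)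
    (hΦcdf : ∀ x : X, ∀ᵐ ω ∂nu, ∃ μ : Measure ℝ, IsProbabilityMeasure μ ∧ μ Sᶜ = 0 ∧
      ∀ t : ℝ, Φ x ω t = (μ (Set.Iic t)).toReal)
    (n : ℕ) (xs : ℕ → X) (y : ℕ → ℝ) (hyS : ∀ j, y j ∈ S)
    (T : Lp ℝ 2 nu →L[ℝ] Lp ℝ 2 nu)
    (hT : ∀ θ : Lp ℝ 2 nu, (T θ : Ω → ℝ) =ᵐ[nu] fun ω =>
      ∑ j ∈ Finset.Icc 1 n, ∫ t in S, (∫ a, θ a * Φ (xs j) a t ∂nu) * Φ (xs j) ω t ∂m)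
    (e : ℕ → Lp ℝ 2 nu) (he : Orthonormal ℝ e)
    (hespan : (Submodule.span ℝ (Set.range e)).topologicalClosure = ⊤)
    (lam : ℕ → ℝ) (hlam : ∀ i, 0 ≤ lam i) (heig : ∀ i : ℕ, T (e i) = lam i • e i)
    (σ : ℕ → ℝ) (hσ0 : ∀ i, σ i ≠ 0) (hσ : Summable fun i => |σ i|)
    -- the regularized loss
    (Loss : Lp ℝ 2 nu → ℝ)
    (hLoss : Loss = fun θ =>
      (∑ j ∈ Finset.Icc 1 n,
        ∫ t in S, ((if y j ≤ t then (1:ℝ) else 0) - ∫ a, θ a * Φ (xs j) a t ∂nu) ^ 2 ∂m)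
      + ∑' i, ⟪e i, θ⟫ ^ 2 / σ i ^ 2)
    -- the estimator `θ̂_σ = U_{n,σ}⁻¹ (∑_j ∫_S I_{y_j} Φ_j dm)`
    (θhat : Lp ℝ 2 nu)
    (hθhat : θhat = ∑' i,
      ((σ i ^ 2 *
          ∫ a, (e i) a *
            (∑ j ∈ Finset.Icc 1 n,
              ∫ t in S, (if y j ≤ t then (1:ℝ) else 0) * Φ (xs j) a t ∂m) ∂nu)
        / (1 + lam i * σ i ^ 2)) • e i) :
    (Summable fun i => ⟪e i, θhat⟫ ^ 2 / σ i ^ 2) ∧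
    ∀ θ : Lp ℝ 2 nu, (Summable fun i => ⟪e i, θ⟫ ^ 2 / σ i ^ 2) → θ ≠ θhat →
      Loss θhat < Loss θ := by
  classical
  -- abbreviations
  set Ij : ℕ → ℝ → ℝ := fun j t => if y j ≤ t then (1:ℝ) else 0 with hIjdef
  -- elementary facts about σ and lam
  have hσsq_pos : ∀ i, (0:ℝ) < σ i ^ 2 := fun i => by
    have := hσ0 i; positivity
  have hden : ∀ i, (0:ℝ) < 1 + lam i * σ i ^ 2 := fun i => by
    have := hlam i; nlinarith [hσsq_pos i]
  have hσ2 : Summable fun i => σ i ^ 2 := by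
    refine Summable.of_nonneg_of_le (fun i => sq_nonneg _) (fun i => ?_)
      (hσ.mul_left (∑' k, |σ k|))
    have h1 : |σ i| ≤ ∑' k, |σ k| := Summable.le_tsum hσ i (fun _ _ => abs_nonneg _)
    calc σ i ^ 2 = |σ i| * |σ i| := by rw [← abs_mul, ← sq, abs_of_nonneg (sq_nonneg _)]
      _ ≤ (∑' k, |σ k|) * |σ i| := mul_le_mul_of_nonneg_right h1 (abs_nonneg _)
  -- measurability of Φ sections
  have hΦj : ∀ j, Measurable fun p : Ω × ℝ => Φ (xs j) p.1 p.2 := by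
    intro j
    exact hΦmeas.comp (measurable_const.prodMk measurable_id)
  have hΦj' : ∀ j, Measurable fun p : ℝ × Ω => Φ (xs j) p.2 p.1 := fun j =>
    (hΦj j).comp measurable_swap
  have hΦjt : ∀ j t, Measurable fun a : Ω => Φ (xs j) a t := fun j t =>
    (hΦj j).comp (measurable_id.prodMk measurable_const)
  have hΦbd : ∀ j a t, |Φ (xs j) a t| ≤ 1 := fun j a t =>
    abs_le.2 ⟨by linarith [(hΦ01 (xs j) a t).1], (hΦ01 (xs j) a t).2⟩
  have hImeas : ∀ j, Measurable (Ij j) := by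
    intro j
    exact Measurable.ite measurableSet_Ici measurable_const measurable_const
  have hIbd : ∀ j t, |Ij j t| ≤ 1 := by
    intro j t; simp only [hIjdef]; split <;> simp
  -- integrability facts for elements of L²
  have hθint : ∀ θ : Lp ℝ 2 nu, Integrable (θ : Ω → ℝ) nu := fun θ =>
    (Lp.memLp θ).integrable one_le_two
  have hmul_int : ∀ (θ : Lp ℝ 2 nu) (j : ℕ) (t : ℝ),
      Integrable (fun a => (θ : Ω → ℝ) a * Φ (xs j) a t) nu := by
    intro θ j t
    have := Integrable.bdd_mul (hθint θ) (hΦjt j t).aestronglyMeasurable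
      (c := 1) (ae_of_all _ fun a => by simpa using hΦbd j a t)
    simpa [mul_comm] using this
  -- bound and measurability of Ψ
  have hΨbd : ∀ (θ : Lp ℝ 2 nu) (j : ℕ) (t : ℝ),
      |∫ a, (θ : Ω → ℝ) a * Φ (xs j) a t ∂nu| ≤ ∫ a, |(θ : Ω → ℝ) a| ∂nu := by
    intro θ j t
    calc |∫ a, (θ : Ω → ℝ) a * Φ (xs j) a t ∂nu| ≤ ∫ a, |(θ : Ω → ℝ) a * Φ (xs j) a t| ∂nu :=
          by simpa only [Real.norm_eq_abs] using
            norm_integral_le_integral_norm (fun a => (θ : Ω → ℝ) a * Φ (xs j) a t) (μ := nu)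
      _ ≤ ∫ a, |(θ : Ω → ℝ) a| ∂nu := by
          refine integral_mono_ae (hmul_int θ j t).abs (hθint θ).abs (ae_of_all _ fun a => ?_)
          dsimp only
          rw [abs_mul]
          exact mul_le_of_le_one_right (abs_nonneg _) (hΦbd j a t)
  have hΨaesm : ∀ (θ : Lp ℝ 2 nu) (j : ℕ),
      AEStronglyMeasurable (fun t => ∫ a, (θ : Ω → ℝ) a * Φ (xs j) a t ∂nu) (m.restrict S) := by
    intro θ j
    exact AEStronglyMeasurable.integral_prod_right'
      (f := fun p : ℝ × Ω => (θ : Ω → ℝ) p.2 * Φ (xs j) p.2 p.1)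
      (((Lp.aestronglyMeasurable θ).comp_snd).mul (hΦj' j).aestronglyMeasurable)
  -- Ψ is additive
  have hΨadd : ∀ (θ₁ θ₂ : Lp ℝ 2 nu) (j : ℕ) (t : ℝ),
      (∫ a, ((θ₁ + θ₂ : Lp ℝ 2 nu) : Ω → ℝ) a * Φ (xs j) a t ∂nu)
        = (∫ a, (θ₁ : Ω → ℝ) a * Φ (xs j) a t ∂nu)
          + ∫ a, (θ₂ : Ω → ℝ) a * Φ (xs j) a t ∂nu := by
    intro θ₁ θ₂ j t
    rw [← integral_add (hmul_int θ₁ j t) (hmul_int θ₂ j t)]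
    refine integral_congr_ae ?_
    filter_upwards [Lp.coeFn_add θ₁ θ₂] with a ha
    rw [ha]; simp [add_mul]
  -- inner product of L² as an integral
  have hinner : ∀ f g : Lp ℝ 2 nu, ⟪f, g⟫ = ∫ a, (f : Ω → ℝ) a * (g : Ω → ℝ) a ∂nu := by
    intro f g
    rw [L2.inner_def]
    simp [RCLike.inner_apply]
    exact integral_congr_ae (ae_of_all _ fun a => mul_comm _ _)
  -- the function b and its Lp version
  set b : Ω → ℝ := fun ωa => ∑ j ∈ Finset.Icc 1 n, ∫ t in S, Ij j t * Φ (xs j) ωa t ∂m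
    with hbdef
  have hbmeas : Measurable b := by
    refine Finset.measurable_sum _ fun j _ => ?_
    apply (StronglyMeasurable.integral_prod_right'
      (f := fun p : Ω × ℝ => Ij j p.2 * Φ (xs j) p.1 p.2) ?_).measurable
    exact (((hImeas j).comp measurable_snd).mul (hΦj j)).stronglyMeasurable
  have hSfin : (m S).toReal ≤ 1 :=
    ENNReal.toReal_le_of_le_ofReal one_pos.le (by simpa using prob_le_one (μ := m) (s := S))
  have hΦωt : ∀ (j : ℕ) (ωa : Ω), Measurable fun t => Φ (xs j) ωa t := fun j ωa =>
    (hΦj j).comp (measurable_const.prodMk measurable_id)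
  have hintbd : ∀ (g : ℝ → ℝ) (C : ℝ), 0 ≤ C → (∀ t, |g t| ≤ C) →
      AEStronglyMeasurable g (m.restrict S) → |∫ t in S, g t ∂m| ≤ C := by
    intro g C hC hg hmg
    have := norm_integral_le_of_norm_le_const (μ := m.restrict S) (f := g) (C := C)
      (ae_of_all _ fun t => by simpa using hg t)
    refine le_trans (by simpa using this) ?_
    calc C * (m S).toReal ≤ C * 1 :=
          mul_le_mul_of_nonneg_left hSfin hC
      _ = C := mul_one C
  have hbbd : ∀ ωa, |b ωa| ≤ (n : ℝ) := by
    intro ωa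
    calc |b ωa| ≤ ∑ j ∈ Finset.Icc 1 n, |∫ t in S, Ij j t * Φ (xs j) ωa t ∂m| :=
          Finset.abs_sum_le_sum_abs _ _
      _ ≤ ∑ j ∈ Finset.Icc 1 n, (1:ℝ) := by
          refine Finset.sum_le_sum fun j _ => ?_
          refine hintbd _ 1 one_pos.le (fun t => ?_) ?_
          · rw [abs_mul]
            exact mul_le_one₀ (hIbd j t) (abs_nonneg _) (hΦbd j ωa t)
          · exact ((hImeas j).mul (hΦωt j ωa)).aestronglyMeasurable
      _ ≤ (n : ℝ) := by
          simp [Nat.card_Icc]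
  have hbmem : MemLp b 2 nu :=
    MemLp.of_bound hbmeas.aestronglyMeasurable (n : ℝ) (ae_of_all _ fun ωa => by
      simpa [Real.norm_eq_abs] using hbbd ωa)
  set bL : Lp ℝ 2 nu := hbmem.toLp b with hbL
  have hbLcoe : (bL : Ω → ℝ) =ᵐ[nu] b := hbmem.coeFn_toLp
  -- coefficients of bL agree with the integrals in hθhat
  have hbc : ∀ i, (∫ a, ((e i : Ω → ℝ)) a *
      (∑ j ∈ Finset.Icc 1 n, ∫ t in S, Ij j t * Φ (xs j) a t ∂m) ∂nu) = ⟪e i, bL⟫ := by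
    intro i
    rw [hinner]
    refine integral_congr_ae ?_
    filter_upwards [hbLcoe] with a ha
    rw [ha]
  -- the coefficient sequence of θhat
  set c : ℕ → ℝ := fun i => σ i ^ 2 * ⟪e i, bL⟫ / (1 + lam i * σ i ^ 2) with hcdef
  have hθhat' : θhat = ∑' i, c i • e i := by
    rw [hθhat]
    refine tsum_congr fun i => ?_
    have h := hbc i
    simp only [hIjdef] at h
    rw [h]
  have hbc_bd : ∀ i, |⟪e i, bL⟫| ≤ ‖bL‖ := by
    intro i
    have := abs_real_inner_le_norm (e i) bL
    rwa [he.1 i, one_mul] at this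
  have hc_bd : ∀ i, |c i| ≤ ‖bL‖ * σ i ^ 2 := by
    intro i
    have h2 : (1:ℝ) ≤ 1 + lam i * σ i ^ 2 := by nlinarith [hσsq_pos i, hlam i]
    have h3 : |c i| = σ i ^ 2 * |⟪e i, bL⟫| / (1 + lam i * σ i ^ 2) := by
      simp only [hcdef]
      rw [abs_div, abs_of_pos (hden i), abs_mul, abs_of_pos (hσsq_pos i)]
    rw [h3]
    calc σ i ^ 2 * |⟪e i, bL⟫| / (1 + lam i * σ i ^ 2) ≤ σ i ^ 2 * |⟪e i, bL⟫| :=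
          div_le_self (by positivity) h2
      _ ≤ σ i ^ 2 * ‖bL‖ := mul_le_mul_of_nonneg_left (hbc_bd i) (hσsq_pos i).le
      _ = ‖bL‖ * σ i ^ 2 := mul_comm _ _
  have hcsum : Summable fun i => c i • e i := by
    apply Summable.of_norm
    refine Summable.of_nonneg_of_le (fun i => norm_nonneg _) (fun i => ?_) (hσ2.mul_left ‖bL‖)
    rw [norm_smul, he.1 i, mul_one, Real.norm_eq_abs]
    exact hc_bd i
  -- extraction of coefficients from a HasSum
  have hcoefH : ∀ (d : ℕ → ℝ) (v : Lp ℝ 2 nu), HasSum (fun k => d k • e k) v →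
      ∀ i, ⟪e i, v⟫ = d i := by
    intro d v hv i
    have h1 : HasSum (fun k => ⟪e i, d k • e k⟫) ⟪e i, v⟫ := hv.mapL (innerSL ℝ (e i))
    have h2 : (fun k => ⟪e i, d k • e k⟫) = fun k => if k = i then d i else 0 := by
      funext k
      rw [real_inner_smul_right, orthonormal_iff_ite.mp he i k]
      by_cases hk : k = i
      · simp [hk]
      · simp [hk, Ne.symm hk]
    rw [h2] at h1
    exact h1.unique (hasSum_ite_eq i (d i))
  have hac : ∀ i, ⟪e i, θhat⟫ = c i := by
    intro i
    refine hcoefH c θhat ?_ i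
    rw [hθhat']
    exact hcsum.hasSum
  -- the first claim : summability
  have hsum_hat : Summable fun i => ⟪e i, θhat⟫ ^ 2 / σ i ^ 2 := by
    have : ∀ i, ⟪e i, θhat⟫ ^ 2 / σ i ^ 2 ≤ (‖bL‖ ^ 2) * σ i ^ 2 := by
      intro i
      rw [hac i]
      have h1 : c i ^ 2 ≤ (‖bL‖ * σ i ^ 2) ^ 2 := by
        rw [← abs_of_nonneg (sq_nonneg (c i)), abs_of_nonneg (sq_nonneg (c i))]
        calc c i ^ 2 = |c i| ^ 2 := (sq_abs _).symm
          _ ≤ (‖bL‖ * σ i ^ 2) ^ 2 := by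
            apply pow_le_pow_left₀ (abs_nonneg _) (hc_bd i) 2
      rw [div_le_iff₀ (hσsq_pos i)]
      calc c i ^ 2 ≤ (‖bL‖ * σ i ^ 2) ^ 2 := h1
        _ = ‖bL‖ ^ 2 * σ i ^ 2 * σ i ^ 2 := by ring
    refine Summable.of_nonneg_of_le (fun i => by positivity) this (hσ2.mul_left _)
  refine ⟨hsum_hat, ?_⟩
  -- Hilbert basis machinery
  set B : HilbertBasis ℕ ℝ (Lp ℝ 2 nu) := HilbertBasis.mk he hespan.ge with hBdef
  have hBe : ∀ i, B i = e i := fun i => by rw [hBdef, HilbertBasis.coe_mk]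
  have hpars : ∀ f g : Lp ℝ 2 nu, HasSum (fun i => ⟪e i, f⟫ * ⟪e i, g⟫) ⟪f, g⟫ := by
    intro f g
    have := B.hasSum_inner_mul_inner f g
    simp only [hBe] at this
    have hfun : (fun i => ⟪e i, f⟫ * ⟪e i, g⟫) = fun i => ⟪f, e i⟫ * ⟪e i, g⟫ := by
      funext i; rw [real_inner_comm f (e i)]
    rw [hfun]; exact this
  have hzero : ∀ f : Lp ℝ 2 nu, (∀ i, ⟪e i, f⟫ = 0) → f = 0 := by
    intro f hf
    have h := hpars f f
    simp only [hf, mul_zero] at h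
    have h0 : ⟪f, f⟫ = (0:ℝ) := h.unique hasSum_zero
    exact inner_self_eq_zero.mp h0
  -- Fubini swap
  have hswap : ∀ (θ : Lp ℝ 2 nu) (j : ℕ) (g : ℝ → ℝ) (C : ℝ),
      AEStronglyMeasurable g (m.restrict S) → (∀ t, |g t| ≤ C) →
      (∫ a, (θ : Ω → ℝ) a * (∫ t in S, g t * Φ (xs j) a t ∂m) ∂nu)
        = ∫ t in S, g t * (∫ a, (θ : Ω → ℝ) a * Φ (xs j) a t ∂nu) ∂m := by
    intro θ j g C hg hgC
    have hFaesm : AEStronglyMeasurable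
        (fun p : Ω × ℝ => (θ : Ω → ℝ) p.1 * (g p.2 * Φ (xs j) p.1 p.2))
        (nu.prod (m.restrict S)) :=
      ((Lp.aestronglyMeasurable θ).comp_fst).mul ((hg.comp_snd).mul (hΦj j).aestronglyMeasurable)
    have hInt : Integrable (fun p : Ω × ℝ => (θ : Ω → ℝ) p.1 * (g p.2 * Φ (xs j) p.1 p.2))
        (nu.prod (m.restrict S)) := by
      refine aux_integrable_prod_of_bound nu (m.restrict S) hFaesm
        ((hθint θ).abs.const_mul |C|) (ae_of_all _ fun z => ?_)
      rw [Real.norm_eq_abs, abs_mul, abs_mul]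
      calc |(θ : Ω → ℝ) z.1| * (|g z.2| * |Φ (xs j) z.1 z.2|)
          ≤ |(θ : Ω → ℝ) z.1| * (|C| * 1) := by
            refine mul_le_mul_of_nonneg_left ?_ (abs_nonneg _)
            exact mul_le_mul (le_trans (hgC z.2) (le_abs_self C)) (hΦbd j z.1 z.2)
              (abs_nonneg _) (abs_nonneg _)
        _ = |C| * |(θ : Ω → ℝ) z.1| := by ring
    calc (∫ a, (θ : Ω → ℝ) a * (∫ t in S, g t * Φ (xs j) a t ∂m) ∂nu)
        = ∫ a, ∫ t in S, (θ : Ω → ℝ) a * (g t * Φ (xs j) a t) ∂m ∂nu := by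
          refine integral_congr_ae (ae_of_all _ fun a => ?_)
          dsimp only
          rw [← integral_const_mul]
      _ = ∫ t in S, ∫ a, (θ : Ω → ℝ) a * (g t * Φ (xs j) a t) ∂nu ∂m :=
          integral_integral_swap hInt
      _ = ∫ t in S, g t * (∫ a, (θ : Ω → ℝ) a * Φ (xs j) a t ∂nu) ∂m := by
          refine integral_congr_ae (ae_of_all _ fun t => ?_)
          dsimp only
          rw [← integral_const_mul]
          refine integral_congr_ae (ae_of_all _ fun a => ?_)
          ring
  -- the inner product with bL
  have key_inner : ∀ θ : Lp ℝ 2 nu,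
      ⟪bL, θ⟫ = ∑ j ∈ Finset.Icc 1 n,
        ∫ t in S, Ij j t * (∫ a, (θ : Ω → ℝ) a * Φ (xs j) a t ∂nu) ∂m := by
    intro θ
    rw [hinner]
    have h1 : (∫ a, (bL : Ω → ℝ) a * (θ : Ω → ℝ) a ∂nu)
        = ∫ a, (θ : Ω → ℝ) a * b a ∂nu := by
      refine integral_congr_ae ?_
      filter_upwards [hbLcoe] with a ha
      rw [ha, mul_comm]
    rw [h1]
    have h2 : (∫ a, (θ : Ω → ℝ) a * b a ∂nu)
        = ∑ j ∈ Finset.Icc 1 n,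
            ∫ a, (θ : Ω → ℝ) a * (∫ t in S, Ij j t * Φ (xs j) a t ∂m) ∂nu := by
      rw [← integral_finset_sum]
      · refine integral_congr_ae (ae_of_all _ fun a => ?_)
        dsimp only
        rw [Finset.mul_sum]
      · intro j _
        have hmeasj : Measurable fun a => ∫ t in S, Ij j t * Φ (xs j) a t ∂m := by
          apply (StronglyMeasurable.integral_prod_right'
            (f := fun p : Ω × ℝ => Ij j p.2 * Φ (xs j) p.1 p.2) ?_).measurable
          exact (((hImeas j).comp measurable_snd).mul (hΦj j)).stronglyMeasurable
        have := Integrable.bdd_mul (hθint θ) hmeasj.aestronglyMeasurable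
          (c := 1) (ae_of_all _ fun a => by
            rw [Real.norm_eq_abs]
            refine hintbd _ 1 one_pos.le (fun t => ?_)
              ((hImeas j).mul (hΦωt j a)).aestronglyMeasurable
            rw [abs_mul]
            exact mul_le_one₀ (hIbd j t) (abs_nonneg _) (hΦbd j a t))
        simpa [mul_comm] using this
    rw [h2]
    refine Finset.sum_congr rfl fun j _ => ?_
    exact hswap θ j (Ij j) 1 ((hImeas j).aestronglyMeasurable) (hIbd j)
  -- the inner product with T ξ
  have key_T : ∀ (ξ θ : Lp ℝ 2 nu),
      ⟪T ξ, θ⟫ = ∑ j ∈ Finset.Icc 1 n,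
        ∫ t in S, (∫ a, (ξ : Ω → ℝ) a * Φ (xs j) a t ∂nu)
          * (∫ a, (θ : Ω → ℝ) a * Φ (xs j) a t ∂nu) ∂m := by
    intro ξ θ
    rw [hinner]
    have h1 : (∫ a, (T ξ : Ω → ℝ) a * (θ : Ω → ℝ) a ∂nu)
        = ∫ a, (θ : Ω → ℝ) a *
            (∑ j ∈ Finset.Icc 1 n,
              ∫ t in S, (∫ aa, (ξ : Ω → ℝ) aa * Φ (xs j) aa t ∂nu) * Φ (xs j) a t ∂m) ∂nu := by
      refine integral_congr_ae ?_
      filter_upwards [hT ξ] with a ha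
      rw [ha, mul_comm]
    rw [h1]
    have h2 : (∫ a, (θ : Ω → ℝ) a *
            (∑ j ∈ Finset.Icc 1 n,
              ∫ t in S, (∫ aa, (ξ : Ω → ℝ) aa * Φ (xs j) aa t ∂nu) * Φ (xs j) a t ∂m) ∂nu)
        = ∑ j ∈ Finset.Icc 1 n,
            ∫ a, (θ : Ω → ℝ) a *
              (∫ t in S, (∫ aa, (ξ : Ω → ℝ) aa * Φ (xs j) aa t ∂nu) * Φ (xs j) a t ∂m) ∂nu := by
      rw [← integral_finset_sum]
      · refine integral_congr_ae (ae_of_all _ fun a => ?_)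
        dsimp only
        rw [Finset.mul_sum]
      · intro j _
        have hmeasj : AEStronglyMeasurable (fun a =>
            ∫ t in S, (∫ aa, (ξ : Ω → ℝ) aa * Φ (xs j) aa t ∂nu) * Φ (xs j) a t ∂m) nu :=
          AEStronglyMeasurable.integral_prod_right'
            (f := fun p : Ω × ℝ =>
              (∫ aa, (ξ : Ω → ℝ) aa * Φ (xs j) aa p.2 ∂nu) * Φ (xs j) p.1 p.2)
            (((hΨaesm ξ j).comp_snd).mul (hΦj j).aestronglyMeasurable)
        have := Integrable.bdd_mul (hθint θ) hmeasj
          (c := ∫ a, |(ξ : Ω → ℝ) a| ∂nu) (ae_of_all _ fun a => by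
            rw [Real.norm_eq_abs]
            refine hintbd _ _ (integral_nonneg fun aa => abs_nonneg _) (fun t => ?_) ?_
            · rw [abs_mul]
              calc |∫ aa, (ξ : Ω → ℝ) aa * Φ (xs j) aa t ∂nu| * |Φ (xs j) a t|
                  ≤ (∫ aa, |(ξ : Ω → ℝ) aa| ∂nu) * 1 :=
                    mul_le_mul (hΨbd ξ j t) (hΦbd j a t) (abs_nonneg _)
                      (integral_nonneg fun aa => abs_nonneg _)
                _ = ∫ aa, |(ξ : Ω → ℝ) aa| ∂nu := mul_one _
            · exact (hΨaesm ξ j).mul ((hΦωt j a).aestronglyMeasurable))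
        exact this.congr (ae_of_all _ fun a => mul_comm _ _)
    rw [h2]
    refine Finset.sum_congr rfl fun j _ => ?_
    exact hswap θ j _ (∫ a, |(ξ : Ω → ℝ) a| ∂nu) (hΨaesm ξ j) (hΨbd ξ j)
  clear_value Ij b bL c B
  -- coefficients of T θhat
  have hTsum : HasSum (fun k => (c k * lam k) • e k) (T θhat) := by
    have h1 : HasSum (fun k => c k • e k) θhat := by rw [hθhat']; exact hcsum.hasSum
    have h2 := h1.mapL T
    have h3 : (fun k => T (c k • e k)) = fun k => (c k * lam k) • e k := by
      funext k
      rw [ContinuousLinearMap.map_smul, heig k, smul_smul]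
    rw [h3] at h2
    exact h2
  have hTc : ∀ i, ⟪e i, T θhat⟫ = c i * lam i := fun i => hcoefH _ _ hTsum i
  -- the key algebraic identity
  have hkey : ∀ i, ⟪e i, bL⟫ = c i * lam i + c i / σ i ^ 2 := by
    intro i
    have hd := (hden i).ne'
    have hs := (hσsq_pos i).ne'
    have hd' : 1 + σ i ^ 2 * lam i ≠ 0 := by rwa [mul_comm] at hd
    have h0 := hσ0 i
    simp only [hcdef]
    field_simp
    ring
  have hsum_c : Summable fun i => c i ^ 2 / σ i ^ 2 := by
    have h := hsum_hat
    simp only [hac] at h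
    exact h
  -- main part
  intro θ hsumθ hne
  set δ : Lp ℝ 2 nu := θ - θhat with hδdef
  have hδne : δ ≠ 0 := sub_ne_zero.mpr hne
  have hθδ : θhat + δ = θ := by rw [hδdef]; abel
  have hdi : ∀ i, ⟪e i, δ⟫ = ⟪e i, θ⟫ - c i := by
    intro i; rw [hδdef, inner_sub_right, hac i]
  -- summability facts
  have hsum_d : Summable fun i => ⟪e i, δ⟫ ^ 2 / σ i ^ 2 := by
    refine Summable.of_nonneg_of_le (fun i => by positivity) (fun i => ?_)
      ((hsumθ.mul_left 2).add (hsum_c.mul_left 2))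
    have hle : ⟪e i, δ⟫ ^ 2 ≤ 2 * ⟪e i, θ⟫ ^ 2 + 2 * c i ^ 2 := by
      rw [hdi i]; nlinarith [sq_nonneg (⟪e i, θ⟫ + c i)]
    calc ⟪e i, δ⟫ ^ 2 / σ i ^ 2 ≤ (2 * ⟪e i, θ⟫ ^ 2 + 2 * c i ^ 2) / σ i ^ 2 := by
          gcongr
      _ = 2 * (⟪e i, θ⟫ ^ 2 / σ i ^ 2) + 2 * (c i ^ 2 / σ i ^ 2) := by
          rw [add_div, mul_div_assoc, mul_div_assoc]
  have hsum_cd : Summable fun i => c i * ⟪e i, δ⟫ / σ i ^ 2 := by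
    refine Summable.of_abs ?_
    refine Summable.of_nonneg_of_le (fun i => abs_nonneg _) (fun i => ?_)
      (hsum_c.add hsum_d)
    have h1 : |c i * ⟪e i, δ⟫| ≤ c i ^ 2 + ⟪e i, δ⟫ ^ 2 := by
      rw [abs_mul]
      nlinarith [sq_nonneg (|c i| - |⟪e i, δ⟫|), sq_abs (c i), sq_abs ⟪e i, δ⟫,
        abs_nonneg (c i), abs_nonneg ⟪e i, δ⟫]
    calc |c i * ⟪e i, δ⟫ / σ i ^ 2| = |c i * ⟪e i, δ⟫| / σ i ^ 2 := by
          rw [abs_div, abs_of_pos (hσsq_pos i)]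
      _ ≤ (c i ^ 2 + ⟪e i, δ⟫ ^ 2) / σ i ^ 2 := by gcongr
      _ = c i ^ 2 / σ i ^ 2 + ⟪e i, δ⟫ ^ 2 / σ i ^ 2 := add_div _ _ _
  -- vanishing of the cross term
  have hP1 : HasSum (fun i => ⟪e i, bL⟫ * ⟪e i, δ⟫) ⟪bL, δ⟫ := hpars bL δ
  have hP2 : HasSum (fun i => c i * lam i * ⟪e i, δ⟫) ⟪T θhat, δ⟫ := by
    have h := hpars (T θhat) δ
    simpa only [hTc] using h
  have hcross0 : ⟪bL, δ⟫ - ⟪T θhat, δ⟫ - ∑' i, c i * ⟪e i, δ⟫ / σ i ^ 2 = 0 := by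
    have h3 := hsum_cd.hasSum
    have h4 := (hP1.sub hP2).sub h3
    have h5 : (fun i => ⟪e i, bL⟫ * ⟪e i, δ⟫ - c i * lam i * ⟪e i, δ⟫
        - c i * ⟪e i, δ⟫ / σ i ^ 2) = fun _ => (0:ℝ) := by
      funext i
      rw [hkey i]
      ring
    rw [h5] at h4
    exact h4.unique hasSum_zero
  -- tsum decomposition
  have htsum_split : (∑' i, ⟪e i, θ⟫ ^ 2 / σ i ^ 2)
      = (∑' i, c i ^ 2 / σ i ^ 2)
        + (2 * (∑' i, c i * ⟪e i, δ⟫ / σ i ^ 2) + ∑' i, ⟪e i, δ⟫ ^ 2 / σ i ^ 2) := by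
    have hterm : ∀ i, ⟪e i, θ⟫ ^ 2 / σ i ^ 2
        = c i ^ 2 / σ i ^ 2 + (2 * (c i * ⟪e i, δ⟫ / σ i ^ 2) + ⟪e i, δ⟫ ^ 2 / σ i ^ 2) := by
      intro i
      have h6 : ⟪e i, θ⟫ = c i + ⟪e i, δ⟫ := by rw [hdi i]; ring
      rw [h6]
      have hs := (hσsq_pos i).ne'
      field_simp
      ring
    calc (∑' i, ⟪e i, θ⟫ ^ 2 / σ i ^ 2)
        = ∑' i, (c i ^ 2 / σ i ^ 2 + (2 * (c i * ⟪e i, δ⟫ / σ i ^ 2) + ⟪e i, δ⟫ ^ 2 / σ i ^ 2)) :=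
          tsum_congr hterm
      _ = (∑' i, c i ^ 2 / σ i ^ 2)
          + ∑' i, (2 * (c i * ⟪e i, δ⟫ / σ i ^ 2) + ⟪e i, δ⟫ ^ 2 / σ i ^ 2) :=
          Summable.tsum_add hsum_c ((hsum_cd.mul_left 2).add hsum_d)
      _ = (∑' i, c i ^ 2 / σ i ^ 2)
          + (2 * (∑' i, c i * ⟪e i, δ⟫ / σ i ^ 2) + ∑' i, ⟪e i, δ⟫ ^ 2 / σ i ^ 2) := by
          rw [Summable.tsum_add (hsum_cd.mul_left 2) hsum_d, tsum_mul_left]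
  -- pointwise split of Ψ
  have hPsplit : ∀ (j : ℕ) (t : ℝ), (∫ a, (θ : Ω → ℝ) a * Φ (xs j) a t ∂nu)
      = (∫ a, (θhat : Ω → ℝ) a * Φ (xs j) a t ∂nu)
        + ∫ a, (δ : Ω → ℝ) a * Φ (xs j) a t ∂nu := by
    intro j t
    conv_lhs => rw [← hθδ]
    exact hΨadd θhat δ j t
  -- integrability helpers on S
  have hbdd_int : ∀ (f : ℝ → ℝ) (C : ℝ), AEStronglyMeasurable f (m.restrict S) →
      (∀ t, |f t| ≤ C) → Integrable f (m.restrict S) := by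
    intro f C hm hb
    exact Integrable.mono' (integrable_const C) hm (ae_of_all _ fun t => by simpa using hb t)
  have hmulint : ∀ (f g : ℝ → ℝ) (Cf Cg : ℝ), AEStronglyMeasurable f (m.restrict S) →
      (∀ t, |f t| ≤ Cf) → AEStronglyMeasurable g (m.restrict S) → (∀ t, |g t| ≤ Cg) →
      Integrable (fun t => f t * g t) (m.restrict S) := by
    intro f g Cf Cg hfm hfb hgm hgb
    refine hbdd_int _ (Cf * Cg) (hfm.mul hgm) fun t => ?_
    rw [abs_mul]
    exact mul_le_mul (hfb t) (hgb t) (abs_nonneg _) (le_trans (abs_nonneg _) (hfb t))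
  -- per-j data
  have hAaesm : ∀ j, AEStronglyMeasurable
      (fun t => Ij j t - ∫ a, (θhat : Ω → ℝ) a * Φ (xs j) a t ∂nu) (m.restrict S) :=
    fun j => ((hImeas j).aestronglyMeasurable).sub (hΨaesm θhat j)
  have hAbd : ∀ j t, |Ij j t - ∫ a, (θhat : Ω → ℝ) a * Φ (xs j) a t ∂nu|
      ≤ 1 + ∫ a, |(θhat : Ω → ℝ) a| ∂nu := by
    intro j t
    have h1 : |Ij j t - ∫ a, (θhat : Ω → ℝ) a * Φ (xs j) a t ∂nu|
        ≤ |Ij j t| + |∫ a, (θhat : Ω → ℝ) a * Φ (xs j) a t ∂nu| := by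
      have := abs_add_le (Ij j t) (-(∫ a, (θhat : Ω → ℝ) a * Φ (xs j) a t ∂nu))
      simpa [sub_eq_add_neg] using this
    exact h1.trans (add_le_add (hIbd j t) (hΨbd θhat j t))
  have hA2 : ∀ j, Integrable
      (fun t => (Ij j t - ∫ a, (θhat : Ω → ℝ) a * Φ (xs j) a t ∂nu) ^ 2) (m.restrict S) := by
    intro j
    exact (hmulint _ _ _ _ (hAaesm j) (hAbd j) (hAaesm j) (hAbd j)).congr
      (ae_of_all _ fun t => (pow_two _).symm)
  have hD2 : ∀ j, Integrable
      (fun t => (∫ a, (δ : Ω → ℝ) a * Φ (xs j) a t ∂nu) ^ 2) (m.restrict S) := by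
    intro j
    exact (hmulint _ _ _ _ (hΨaesm δ j) (hΨbd δ j) (hΨaesm δ j) (hΨbd δ j)).congr
      (ae_of_all _ fun t => (pow_two _).symm)
  have hAD : ∀ j, Integrable
      (fun t => (Ij j t - ∫ a, (θhat : Ω → ℝ) a * Φ (xs j) a t ∂nu)
        * (∫ a, (δ : Ω → ℝ) a * Φ (xs j) a t ∂nu)) (m.restrict S) :=
    fun j => hmulint _ _ _ _ (hAaesm j) (hAbd j) (hΨaesm δ j) (hΨbd δ j)
  have hID : ∀ j, Integrable
      (fun t => Ij j t * (∫ a, (δ : Ω → ℝ) a * Φ (xs j) a t ∂nu)) (m.restrict S) :=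
    fun j => hmulint _ _ 1 _ (hImeas j).aestronglyMeasurable (hIbd j) (hΨaesm δ j) (hΨbd δ j)
  have hΨΨ : ∀ j, Integrable
      (fun t => (∫ a, (θhat : Ω → ℝ) a * Φ (xs j) a t ∂nu)
        * (∫ a, (δ : Ω → ℝ) a * Φ (xs j) a t ∂nu)) (m.restrict S) :=
    fun j => hmulint _ _ _ _ (hΨaesm θhat j) (hΨbd θhat j) (hΨaesm δ j) (hΨbd δ j)
  -- expansion of each integral term
  have hjterm : ∀ j : ℕ,
      (∫ t in S, (Ij j t - ∫ a, (θ : Ω → ℝ) a * Φ (xs j) a t ∂nu) ^ 2 ∂m)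
      = (∫ t in S, (Ij j t - ∫ a, (θhat : Ω → ℝ) a * Φ (xs j) a t ∂nu) ^ 2 ∂m)
        + ((∫ t in S, (∫ a, (δ : Ω → ℝ) a * Φ (xs j) a t ∂nu) ^ 2 ∂m)
          - 2 * ∫ t in S, (Ij j t - ∫ a, (θhat : Ω → ℝ) a * Φ (xs j) a t ∂nu)
              * (∫ a, (δ : Ω → ℝ) a * Φ (xs j) a t ∂nu) ∂m) := by
    intro j
    have hsplit : (fun t => (Ij j t - ∫ a, (θ : Ω → ℝ) a * Φ (xs j) a t ∂nu) ^ 2)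
        = fun t => (Ij j t - ∫ a, (θhat : Ω → ℝ) a * Φ (xs j) a t ∂nu) ^ 2
          + ((∫ a, (δ : Ω → ℝ) a * Φ (xs j) a t ∂nu) ^ 2
            - 2 * ((Ij j t - ∫ a, (θhat : Ω → ℝ) a * Φ (xs j) a t ∂nu)
              * (∫ a, (δ : Ω → ℝ) a * Φ (xs j) a t ∂nu))) := by
      funext t
      rw [hPsplit j t]
      ring
    have hsub : Integrable (fun t => (∫ a, (δ : Ω → ℝ) a * Φ (xs j) a t ∂nu) ^ 2
        - 2 * ((Ij j t - ∫ a, (θhat : Ω → ℝ) a * Φ (xs j) a t ∂nu)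
          * (∫ a, (δ : Ω → ℝ) a * Φ (xs j) a t ∂nu))) (m.restrict S) :=
      (hD2 j).sub ((hAD j).const_mul 2)
    rw [hsplit]
    rw [integral_add (hA2 j) hsub]
    rw [integral_sub (hD2 j) ((hAD j).const_mul 2)]
    rw [integral_const_mul]
  -- sum over j
  have hsum_jterm :
      (∑ j ∈ Finset.Icc 1 n, ∫ t in S, (Ij j t - ∫ a, (θ : Ω → ℝ) a * Φ (xs j) a t ∂nu) ^ 2 ∂m)
      = (∑ j ∈ Finset.Icc 1 n,
            ∫ t in S, (Ij j t - ∫ a, (θhat : Ω → ℝ) a * Φ (xs j) a t ∂nu) ^ 2 ∂m)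
        + ((∑ j ∈ Finset.Icc 1 n, ∫ t in S, (∫ a, (δ : Ω → ℝ) a * Φ (xs j) a t ∂nu) ^ 2 ∂m)
          - 2 * ∑ j ∈ Finset.Icc 1 n,
              ∫ t in S, (Ij j t - ∫ a, (θhat : Ω → ℝ) a * Φ (xs j) a t ∂nu)
                * (∫ a, (δ : Ω → ℝ) a * Φ (xs j) a t ∂nu) ∂m) := by
    rw [Finset.sum_congr rfl fun j _ => hjterm j, Finset.sum_add_distrib,
      Finset.sum_sub_distrib, Finset.mul_sum]
  -- the cross sum equals the inner products
  have hADsum : (∑ j ∈ Finset.Icc 1 n,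
        ∫ t in S, (Ij j t - ∫ a, (θhat : Ω → ℝ) a * Φ (xs j) a t ∂nu)
          * (∫ a, (δ : Ω → ℝ) a * Φ (xs j) a t ∂nu) ∂m)
      = ⟪bL, δ⟫ - ⟪T θhat, δ⟫ := by
    rw [key_inner δ, key_T θhat δ, ← Finset.sum_sub_distrib]
    refine Finset.sum_congr rfl fun j _ => ?_
    rw [← integral_sub (hID j) (hΨΨ j)]
    refine integral_congr_ae (ae_of_all _ fun t => ?_)
    dsimp only
    ring
  -- the tsum for θhat in terms of c
  have htsum_hat : (∑' i, ⟪e i, θhat⟫ ^ 2 / σ i ^ 2) = ∑' i, c i ^ 2 / σ i ^ 2 :=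
    tsum_congr fun i => by rw [hac i]
  -- grand identity
  have hLossEq :
      (∑ j ∈ Finset.Icc 1 n, ∫ t in S, (Ij j t - ∫ a, (θ : Ω → ℝ) a * Φ (xs j) a t ∂nu) ^ 2 ∂m)
        + (∑' i, ⟪e i, θ⟫ ^ 2 / σ i ^ 2)
      = ((∑ j ∈ Finset.Icc 1 n,
            ∫ t in S, (Ij j t - ∫ a, (θhat : Ω → ℝ) a * Φ (xs j) a t ∂nu) ^ 2 ∂m)
          + (∑' i, ⟪e i, θhat⟫ ^ 2 / σ i ^ 2))
        + ((∑ j ∈ Finset.Icc 1 n, ∫ t in S, (∫ a, (δ : Ω → ℝ) a * Φ (xs j) a t ∂nu) ^ 2 ∂m)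
          + ∑' i, ⟪e i, δ⟫ ^ 2 / σ i ^ 2) := by
    rw [hsum_jterm, hADsum, htsum_split, htsum_hat]
    linarith [hcross0]
  -- positivity
  have hQ1 : 0 ≤ ∑ j ∈ Finset.Icc 1 n,
      ∫ t in S, (∫ a, (δ : Ω → ℝ) a * Φ (xs j) a t ∂nu) ^ 2 ∂m :=
    Finset.sum_nonneg fun j _ => integral_nonneg fun t => sq_nonneg _
  have hQ2 : 0 < ∑' i, ⟪e i, δ⟫ ^ 2 / σ i ^ 2 := by
    have hex : ∃ i, ⟪e i, δ⟫ ≠ 0 := by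
      by_contra h
      push_neg at h
      exact hδne (hzero δ h)
    obtain ⟨i0, hi0⟩ := hex
    refine Summable.tsum_pos hsum_d (fun i => by positivity) i0 ?_
    exact div_pos (lt_of_le_of_ne (sq_nonneg _) (Ne.symm (pow_ne_zero 2 hi0)))
      (hσsq_pos i0)
  -- conclusion
  rw [hLoss]
  dsimp only
  simp only [hIjdef] at hLossEq
  linarith [hLossEq, hQ1, hQ2]
end
end

section
/- For any integer d ≥ 2, the δ₀-packing number of the probability simplex Δ^{d−1} ⊂ ℝ^d under the Euclidean distance is strictly greater than 2^d, where δ₀ := (√e / (2√(πd))) · (√d/3)^{1/(d−1)} · (1/√2)^{d/(d−1)}; moreover δ₀ ≥ √(2e) / (12√(πd)). In particular, there exists a subset 𝒱 ⊆ Δ^{d−1} with |𝒱| > 2^d such that ‖θ − θ'‖ ≥ δ₀ for all distinct θ, θ' ∈ 𝒱. -/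
noncomputable section

/-- The packing radius `δ₀ = (√e / (2√(πd))) (√d/3)^{1/(d−1)} (1/√2)^{d/(d−1)}`. -/
def packingRadius (d : ℕ) : ℝ :=
  Real.sqrt (Real.exp 1) / (2 * Real.sqrt (Real.pi * d))
    * (Real.sqrt d / 3) ^ ((1 : ℝ) / ((d : ℝ) - 1))
    * (1 / Real.sqrt 2) ^ ((d : ℝ) / ((d : ℝ) - 1))

open MeasureTheory Metric

set_option maxHeartbeats 1000000

section Aux

-- (1+y)e^{-y} - (1-y)e^{y} is monotone on [0,∞)
lemma aux_mono : MonotoneOn (fun y : ℝ => (1+y)*Real.exp (-y) - (1-y)*Real.exp y) (Set.Ici 0) := by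
  have hderiv : ∀ y : ℝ, HasDerivAt (fun y : ℝ => (1+y)*Real.exp (-y) - (1-y)*Real.exp y)
      (y * (Real.exp y - Real.exp (-y))) y := by
    intro y
    have h1 : HasDerivAt (fun y : ℝ => (1+y)*Real.exp (-y))
        (1 * Real.exp (-y) + (1+y) * (Real.exp (-y) * (-1))) y := by
      exact (((hasDerivAt_id y).const_add 1)).mul ((Real.hasDerivAt_exp (-y)).comp y ((hasDerivAt_id y).neg))
    have h2 : HasDerivAt (fun y : ℝ => (1-y)*Real.exp y)
        ((-1) * Real.exp y + (1-y) * Real.exp y) y := by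
      exact (((hasDerivAt_id y).neg.const_add 1)).mul (Real.hasDerivAt_exp y)
    have := h1.sub h2
    exact this.congr_deriv (by ring)
  apply monotoneOn_of_deriv_nonneg (convex_Ici 0)
  · exact (Continuous.continuousOn (by continuity))
  · intro x hx
    exact (hderiv x).differentiableAt.differentiableWithinAt
  · intro x hx
    rw [(hderiv x).deriv]
    have hx0 : 0 ≤ x := le_of_lt (by simpa using hx)
    have : Real.exp (-x) ≤ Real.exp x := Real.exp_le_exp.2 (by linarith)
    nlinarith

lemma two_y_le_log {y : ℝ} (h0 : 0 ≤ y) (h1 : y < 1) :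
    2*y ≤ Real.log ((1+y)/(1-y)) := by
  have key : (1-y)*Real.exp y ≤ (1+y)*Real.exp (-y) := by
    have := aux_mono (Set.self_mem_Ici) (Set.mem_Ici.2 h0) h0
    simp at this
    linarith
  have hey : Real.exp (2*y) * (1-y) ≤ 1+y := by
    have hpos : 0 < Real.exp (-y) := Real.exp_pos _
    have hid : Real.exp (2*y) * Real.exp (-y) = Real.exp y := by
      rw [← Real.exp_add]; ring_nf
    have h2 : Real.exp (2*y) * (1-y) * Real.exp (-y) ≤ (1+y) * Real.exp (-y) := by
      calc Real.exp (2*y) * (1-y) * Real.exp (-y) = (1-y) * (Real.exp (2*y) * Real.exp (-y)) := by ring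
        _ = (1-y) * Real.exp y := by rw [hid]
        _ ≤ (1+y)*Real.exp (-y) := key
    exact le_of_mul_le_mul_right (by linarith [h2]) hpos
  have h1y : 0 < 1 - y := by linarith
  have : Real.exp (2*y) ≤ (1+y)/(1-y) := by
    rw [le_div_iff₀ h1y]; exact hey
  calc 2*y = Real.log (Real.exp (2*y)) := (Real.log_exp _).symm
    _ ≤ Real.log ((1+y)/(1-y)) := Real.log_le_log (Real.exp_pos _) this

noncomputable def Gfun (d : ℕ) : ℝ :=
  Real.Gamma (d/2) * (2*Real.exp 1/d) ^ ((d:ℝ)/2) * Real.sqrt d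

lemma Gfun_pos {d : ℕ} (hd : 1 ≤ d) : 0 < Gfun d := by
  have hx : (0:ℝ) < d := by exact_mod_cast hd
  have h1 : 0 < Real.Gamma ((d:ℝ)/2) := Real.Gamma_pos_of_pos (by positivity)
  have h2 : (0:ℝ) < (2*Real.exp 1/(d:ℝ)) := by positivity
  unfold Gfun
  positivity



lemma gstep (d : ℕ) (hd : 2 ≤ d) : Gfun (d+2) ≤ Gfun d := by
  have hx : (2:ℝ) ≤ (d:ℝ) := by exact_mod_cast hd
  set x : ℝ := (d:ℝ) with hxdef
  have hx0 : (0:ℝ) < x := by linarith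
  have hx2 : (0:ℝ) < x + 2 := by linarith
  -- the log inequality
  have hL : 2/(x+1) ≤ Real.log ((x+2)/x) := by
    have h1 : (0:ℝ) < x + 1 := by linarith
    have key := two_y_le_log (y := 1/(x+1)) (by positivity) (by rw [div_lt_one h1]; linarith)
    have e1 : (1 + 1/(x+1))/(1 - 1/(x+1)) = (x+2)/x := by
      field_simp
      rw [add_sub_cancel_right]
      field_simp
      ring
    rw [e1] at key
    calc 2/(x+1) = 2 * (1/(x+1)) := by ring
      _ ≤ _ := key
  -- positivity facts
  have hG : 0 < Real.Gamma (x/2) := Real.Gamma_pos_of_pos (by positivity)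
  have hb1 : (0:ℝ) < 2*Real.exp 1/x := by positivity
  have hb2 : (0:ℝ) < 2*Real.exp 1/(x+2) := by positivity
  have hGd : 0 < Gfun d := Gfun_pos (by omega)
  have hGd2 : 0 < Gfun (d+2) := Gfun_pos (by omega)
  rw [← Real.log_le_log_iff hGd2 hGd]
  have hcast : ((d+2:ℕ):ℝ) = x + 2 := by push_cast; ring
  have hGamma2 : Real.Gamma ((x+2)/2) = (x/2) * Real.Gamma (x/2) := by
    have : (x+2)/2 = x/2 + 1 := by ring
    rw [this, Real.Gamma_add_one (by positivity)]
  have expand : ∀ (g b s e2 : ℝ), 0 < g → 0 < b → 0 < s →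
      Real.log (g * b ^ e2 * Real.sqrt s) = Real.log g + e2 * Real.log b + Real.log (Real.sqrt s) := by
    intro g b s e2 hg hb hs
    rw [Real.log_mul (by positivity) (by positivity), Real.log_mul (by positivity) (by positivity),
      Real.log_rpow hb]
  unfold Gfun
  rw [hcast, hGamma2]
  rw [expand _ _ _ _ (by positivity) hb2 hx2, expand _ _ _ _ hG hb1 hx0]
  rw [Real.log_sqrt (le_of_lt hx2), Real.log_sqrt (le_of_lt hx0)]
  rw [Real.log_mul (by positivity) (ne_of_gt hG)]
  have hlogb1 : Real.log (2*Real.exp 1/x) = Real.log 2 + 1 - Real.log x := by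
    rw [Real.log_div (by positivity) (ne_of_gt hx0), Real.log_mul (by norm_num) (ne_of_gt (Real.exp_pos 1)), Real.log_exp]
  have hlogb2 : Real.log (2*Real.exp 1/(x+2)) = Real.log 2 + 1 - Real.log (x+2) := by
    rw [Real.log_div (by positivity) (ne_of_gt hx2), Real.log_mul (by norm_num) (ne_of_gt (Real.exp_pos 1)), Real.log_exp]
  have hlogx2 : Real.log (x/2) = Real.log x - Real.log 2 := Real.log_div (ne_of_gt hx0) (by norm_num)
  have hlogdiv : Real.log ((x+2)/x) = Real.log (x+2) - Real.log x := Real.log_div (ne_of_gt hx2) (ne_of_gt hx0)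
  rw [hlogb1, hlogb2, hlogx2]
  rw [hlogdiv] at hL
  have hmul : 2 ≤ (x+1) * (Real.log (x+2) - Real.log x) := by
    have h1 : (0:ℝ) < x + 1 := by linarith
    calc (2:ℝ) = (2/(x+1)) * (x+1) := by field_simp
      _ ≤ (Real.log (x+2) - Real.log x) * (x+1) := by
          apply mul_le_mul_of_nonneg_right hL (le_of_lt h1)
      _ = (x+1) * (Real.log (x+2) - Real.log x) := by ring
  nlinarith [hmul]

lemma Gfun_base2 : Gfun 2 < 3 * Real.sqrt (Real.pi * Real.exp 1) := by
  have h2 : Gfun 2 = Real.exp 1 * Real.sqrt 2 := by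
    unfold Gfun
    push_cast
    rw [show ((2:ℝ)/2) = 1 by norm_num, Real.Gamma_one,
      show (2*Real.exp 1/2 : ℝ) = Real.exp 1 from by ring, Real.rpow_one]
    rw [show Real.sqrt 2 = Real.sqrt 2 from rfl]
    ring
  rw [h2]
  have hpe : (0:ℝ) < Real.pi * Real.exp 1 := by positivity
  apply lt_of_pow_lt_pow_left₀ 2 (by positivity)
  have e1 : (Real.exp 1 * Real.sqrt 2)^2 = Real.exp 1 ^2 * 2 := by
    rw [mul_pow, Real.sq_sqrt (by norm_num)]
  have e2 : (3 * Real.sqrt (Real.pi * Real.exp 1))^2 = 9 * (Real.pi * Real.exp 1) := by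
    rw [mul_pow, Real.sq_sqrt (le_of_lt hpe)]; ring
  rw [e1, e2]
  nlinarith [Real.exp_one_lt_d9, Real.pi_gt_three, Real.exp_pos 1]

lemma Gfun_base3 : Gfun 3 < 3 * Real.sqrt (Real.pi * Real.exp 1) := by
  have hG32 : Real.Gamma ((3:ℝ)/2) = Real.sqrt Real.pi / 2 := by
    have : (3:ℝ)/2 = 1/2 + 1 := by norm_num
    rw [this, Real.Gamma_add_one (by norm_num), Real.Gamma_one_half_eq]
    ring
  have h3 : Gfun 3 = Real.sqrt Real.pi / 2 * (2*Real.exp 1/3) ^ ((3:ℝ)/2) * Real.sqrt 3 := by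
    unfold Gfun
    norm_num [hG32]
  rw [h3]
  apply lt_of_pow_lt_pow_left₀ 2 (by positivity)
  have hb : (0:ℝ) < 2*Real.exp 1/3 := by positivity
  have e1 : ((2*Real.exp 1/3 : ℝ) ^ ((3:ℝ)/2))^2 = (2*Real.exp 1/3)^3 := by
    rw [← Real.rpow_natCast ((2*Real.exp 1/3 : ℝ) ^ ((3:ℝ)/2)) 2, ← Real.rpow_mul (le_of_lt hb),
      show ((3:ℝ)/2 * ((2:ℕ):ℝ)) = ((3:ℕ):ℝ) by norm_num, Real.rpow_natCast]
  have e2 : (Real.sqrt Real.pi / 2 * (2*Real.exp 1/3) ^ ((3:ℝ)/2) * Real.sqrt 3)^2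
      = Real.pi / 4 * (2*Real.exp 1/3)^3 * 3 := by
    rw [mul_pow, mul_pow, e1, div_pow, Real.sq_sqrt Real.pi_pos.le, Real.sq_sqrt (by norm_num : (0:ℝ) ≤ 3)]
    ring
  have e3 : (3 * Real.sqrt (Real.pi * Real.exp 1))^2 = 9 * (Real.pi * Real.exp 1) := by
    rw [mul_pow, Real.sq_sqrt (by positivity)]; ring
  rw [e2, e3]
  have he := Real.exp_one_lt_d9
  have hepos := Real.exp_pos 1
  have hpi := Real.pi_pos
  have he2 : Real.exp 1 ^ 2 < 7.4 := by nlinarith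
  have hrw : Real.pi / 4 * (2*Real.exp 1/3)^3 * 3 = Real.pi * Real.exp 1 * (Real.exp 1^2 * 2 / 9) := by ring
  rw [hrw]
  nlinarith [mul_pos hpi hepos]

lemma Gfun_lt (d : ℕ) (hd : 2 ≤ d) : Gfun d < 3 * Real.sqrt (Real.pi * Real.exp 1) := by
  induction d using Nat.strong_induction_on with
  | _ d ih =>
    by_cases h4 : d < 4
    · interval_cases d
      · exact Gfun_base2
      · exact Gfun_base3
    · push_neg at h4
      have hd2 : 2 ≤ d - 2 := by omega
      have hdd : d - 2 + 2 = d := by omega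
      calc Gfun d = Gfun ((d-2)+2) := by rw [hdd]
        _ ≤ Gfun (d-2) := gstep _ hd2
        _ < _ := ih (d-2) (by omega) hd2



theorem volume_corner (m : ℕ) : ∀ t : ℝ, 0 ≤ t →
    volume {x : Fin m → ℝ | (∀ i, 0 ≤ x i) ∧ ∑ i, x i ≤ t}
      = ENNReal.ofReal (t^m / m.factorial) := by
  induction m with
  | zero =>
    intro t ht
    have huniv : {x : Fin 0 → ℝ | (∀ i, 0 ≤ x i) ∧ ∑ i, x i ≤ t} = Set.univ := by
      ext x
      simp [Finset.univ_eq_empty, ht]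
    rw [huniv]
    simp [MeasureTheory.volume_pi, Measure.pi_univ]
  | succ m ih =>
    intro t ht
    set e := MeasurableEquiv.piFinSuccAbove (fun _ : Fin (m+1) => ℝ) 0 with he
    set T : Set (ℝ × (Fin m → ℝ)) :=
      {p | 0 ≤ p.1 ∧ ((∀ i, 0 ≤ p.2 i) ∧ ∑ i, p.2 i ≤ t - p.1)} with hT
    have hmeasT : MeasurableSet T := by
      apply MeasurableSet.inter
      · exact measurableSet_le measurable_const measurable_fst
      apply MeasurableSet.inter
      · show MeasurableSet {p : ℝ × (Fin m → ℝ) | ∀ i, 0 ≤ p.2 i}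
        rw [Set.setOf_forall]
        exact MeasurableSet.iInter fun i =>
          measurableSet_le measurable_const (measurable_snd.eval)
      · have hmeas3 : Measurable (fun p : ℝ × (Fin m → ℝ) => ∑ i, p.2 i) := by fun_prop
        exact measurableSet_le hmeas3 (measurable_const.sub measurable_fst)
    have hpre : e ⁻¹' T = {x : Fin (m+1) → ℝ | (∀ i, 0 ≤ x i) ∧ ∑ i, x i ≤ t} := by
      ext x
      simp only [he, hT, Set.mem_preimage, Set.mem_setOf_eq,
        MeasurableEquiv.piFinSuccAbove_apply, Fin.zero_succAbove, Fin.insertNthEquiv_zero,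
        Fin.consEquiv_symm_apply, Fin.tail]
      rw [Fin.sum_univ_succ, Fin.forall_fin_succ]
      constructor
      · rintro ⟨h0, hrest, hsum⟩; exact ⟨⟨h0, hrest⟩, by linarith⟩
      · rintro ⟨⟨h0, hrest⟩, hsum⟩; exact ⟨h0, hrest, by linarith⟩
    have hmp := (MeasureTheory.measurePreserving_piFinSuccAbove
      (fun _ : Fin (m+1) => (volume : Measure ℝ)) 0)
    have hvol : volume {x : Fin (m+1) → ℝ | (∀ i, 0 ≤ x i) ∧ ∑ i, x i ≤ t}
        = ((volume : Measure ℝ).prod (Measure.pi fun _ : Fin m => volume)) T := by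
      rw [← hpre, MeasureTheory.volume_pi]
      exact hmp.measure_preimage hmeasT.nullMeasurableSet
    rw [hvol, Measure.prod_apply hmeasT]
    have hslice : ∀ a : ℝ, (Measure.pi fun _ : Fin m => (volume : Measure ℝ))
        (Prod.mk a ⁻¹' T)
        = Set.indicator (Set.Icc 0 t) (fun a => ENNReal.ofReal ((t-a)^m / m.factorial)) a := by
      intro a
      by_cases ha : a ∈ Set.Icc 0 t
      · rw [Set.indicator_of_mem ha]
        obtain ⟨ha0, hat⟩ := ha
        have hset : Prod.mk a ⁻¹' T
            = {y : Fin m → ℝ | (∀ i, 0 ≤ y i) ∧ ∑ i, y i ≤ t - a} := by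
          ext y
          simp only [hT, Set.mem_preimage, Set.mem_setOf_eq, ha0, true_and]
        rw [hset, ← MeasureTheory.volume_pi]
        exact ih (t - a) (by linarith)
      · rw [Set.indicator_of_notMem ha]
        simp only [Set.mem_Icc, not_and_or, not_le] at ha
        have hset : Prod.mk a ⁻¹' T = ∅ := by
          ext y
          simp only [hT, Set.mem_preimage, Set.mem_setOf_eq, Set.mem_empty_iff_false, iff_false]
          rintro ⟨ha0, hy0, hsum⟩
          have hsnn : 0 ≤ ∑ i, y i := Finset.sum_nonneg fun i _ => hy0 i
          rcases ha with h | h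
          · linarith
          · linarith
        rw [hset]
        simp
    rw [MeasureTheory.lintegral_congr hslice,
      MeasureTheory.lintegral_indicator measurableSet_Icc _]
    have hcont : Continuous (fun a : ℝ => (t-a)^m / m.factorial) := by fun_prop
    have hint : IntegrableOn (fun a : ℝ => (t-a)^m / m.factorial) (Set.Icc 0 t) :=
      hcont.integrableOn_Icc
    rw [← MeasureTheory.ofReal_integral_eq_lintegral_ofReal hint
      (MeasureTheory.ae_restrict_of_forall_mem measurableSet_Icc
        (fun a ha => by
          have h2 : (0:ℝ) ≤ t - a := by linarith [ha.2]
          positivity))]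
    congr 1
    rw [MeasureTheory.integral_Icc_eq_integral_Ioc,
      ← intervalIntegral.integral_of_le ht]
    rw [intervalIntegral.integral_div]
    have hcs : (∫ a in (0:ℝ)..t, (t-a)^m) = ∫ a in (0:ℝ)..t, a^m := by
      have := intervalIntegral.integral_comp_sub_left (a := (0:ℝ)) (b := t) (fun x => x^m) t
      simpa using this
    rw [hcs, integral_pow]
    rw [Nat.factorial_succ]
    push_cast
    rw [zero_pow (by omega : m+1 ≠ 0)]
    field_simp
    try ring

open Finset

noncomputable def Tmap (m : ℕ) (c : ℝ) :
    EuclideanSpace ℝ (Fin m) →ₗ[ℝ] EuclideanSpace ℝ (Fin m) where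
  toFun x := WithLp.toLp 2 (fun i => x i + c * ∑ j, x j)
  map_add' x y := by
    ext i
    simp only [PiLp.add_apply, PiLp.toLp_apply]
    rw [Finset.sum_add_distrib]
    ring
  map_smul' r x := by
    ext i
    simp only [PiLp.toLp_apply, PiLp.smul_apply, RingHom.id_apply, smul_eq_mul]
    rw [← Finset.mul_sum]
    ring

lemma Tmap_apply (m : ℕ) (c : ℝ) (x : EuclideanSpace ℝ (Fin m)) (i : Fin m) :
    Tmap m c x i = x i + c * ∑ j, x j := rfl

lemma Tmap_det (m : ℕ) (c : ℝ) : LinearMap.det (Tmap m c) = 1 + c * m := by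
  classical
  rw [← LinearMap.det_toMatrix (PiLp.basisFun 2 ℝ (Fin m))]
  have hmat : LinearMap.toMatrix (PiLp.basisFun 2 ℝ (Fin m)) (PiLp.basisFun 2 ℝ (Fin m)) (Tmap m c)
      = 1 + Matrix.replicateCol (Fin 1) (fun _ => c) * Matrix.replicateRow (Fin 1) (fun _ => (1:ℝ)) := by
    ext i j
    rw [LinearMap.toMatrix_apply, PiLp.basisFun_repr, Tmap_apply]
    rw [PiLp.basisFun_apply]
    by_cases h : i = j <;>
      simp [Matrix.one_apply, Matrix.mul_apply, Matrix.replicateCol, Matrix.replicateRow, h,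
        Pi.single_apply, Finset.sum_ite_eq']
  rw [hmat]
  erw [Matrix.det_one_add_replicateCol_mul_replicateRow]
  simp [dotProduct]
  ring

lemma Tmap_norm_sq (m : ℕ) (c : ℝ) (hc : 2*c + c^2*m = 1) (x : EuclideanSpace ℝ (Fin m)) :
    ‖Tmap m c x‖^2 = ‖x‖^2 + (∑ i, x i)^2 := by
  have h1 : ‖Tmap m c x‖^2 = ∑ i, (Tmap m c x i)^2 := by
    rw [EuclideanSpace.norm_eq]
    rw [Real.sq_sqrt (Finset.sum_nonneg fun i _ => sq_nonneg _)]
    congr 1; funext i; rw [Real.norm_eq_abs, sq_abs]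
  have h2 : ‖x‖^2 = ∑ i, (x i)^2 := by
    rw [EuclideanSpace.norm_eq]
    rw [Real.sq_sqrt (Finset.sum_nonneg fun i _ => sq_nonneg _)]
    congr 1; funext i; rw [Real.norm_eq_abs, sq_abs]
  rw [h1, h2]
  set S := ∑ j, x j with hS
  have expand : ∀ i : Fin m, (Tmap m c x i)^2 = (x i)^2 + (2*c*S) * x i + (c*S)^2 := by
    intro i; rw [Tmap_apply, ← hS]; ring
  rw [Finset.sum_congr rfl (fun i _ => expand i)]
  rw [Finset.sum_add_distrib, Finset.sum_add_distrib, ← Finset.mul_sum, ← hS,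
    Finset.sum_const, Finset.card_univ, Fintype.card_fin]
  have : (m : ℝ) * (c*S)^2 = c^2 * m * S^2 := by push_cast; ring
  rw [nsmul_eq_mul, this]
  nlinarith [hc, sq_nonneg S]



lemma exists_maximal_packing {E : Type*} [MetricSpace E] {K : Set E} (hK : IsCompact K)
    {δ : ℝ} (hδ : 0 < δ) :
    ∃ V : Finset E, ↑V ⊆ K ∧ (∀ u ∈ V, ∀ v ∈ V, u ≠ v → δ ≤ dist u v) ∧
      ∀ x ∈ K, ∃ v ∈ V, dist x v < δ := by
  classical
  set P : Finset E → Prop := fun V => ↑V ⊆ K ∧ ∀ u ∈ V, ∀ v ∈ V, u ≠ v → δ ≤ dist u v with hP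
  -- uniform bound on cardinalities
  obtain ⟨t, _, htfin, htcov⟩ := hK.finite_cover_balls (e := δ/2) (by linarith)
  have hbound : ∀ V : Finset E, P V → V.card ≤ htfin.toFinset.card := by
    intro V ⟨hVK, hVsep⟩
    -- injection from V to covering centers
    have hchoice : ∀ v : E, v ∈ V → ∃ c ∈ htfin.toFinset, v ∈ ball c (δ/2) := by
      intro v hv
      have := htcov (hVK hv)
      simp only [Set.mem_iUnion] at this
      obtain ⟨c, hc, hvc⟩ := this
      exact ⟨c, htfin.mem_toFinset.2 hc, hvc⟩
    choose f hf1 hf2 using hchoice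
    apply Finset.card_le_card_of_injOn (fun v => if h : v ∈ V then f v h else v) ?_ ?_
    · intro v hv
      rw [Finset.mem_coe] at hv ⊢
      simp only [hv, dif_pos]
      exact hf1 v hv
    · intro u hu v hv huv
      simp only [Finset.mem_coe] at hu hv
      simp only [hu, hv, dif_pos] at huv
      by_contra hne
      have h1 := hf2 u hu
      have h2 := hf2 v hv
      rw [huv] at h1
      have : dist u v < δ := by
        have d1 := mem_ball.1 h1
        have d2 := mem_ball.1 h2
        calc dist u v ≤ dist u (f v hv) + dist v (f v hv) := dist_triangle_right _ _ _
          _ < δ/2 + δ/2 := add_lt_add d1 d2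
          _ = δ := by ring
      exact absurd this (not_lt.2 (hVsep u hu v hv hne))
  -- the set of achievable cardinalities
  set A : Set ℕ := {n | ∃ V : Finset E, P V ∧ V.card = n} with hA
  have hA0 : 0 ∈ A := ⟨∅, ⟨by simp, by simp⟩, rfl⟩
  have hAbdd : BddAbove A := by
    refine ⟨htfin.toFinset.card, ?_⟩
    rintro n ⟨V, hPV, rfl⟩
    exact hbound V hPV
  have hmem := Nat.sSup_mem (s := A) ⟨0, hA0⟩ hAbdd
  obtain ⟨V, hPV, hVcard⟩ := hmem
  refine ⟨V, hPV.1, hPV.2, ?_⟩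
  intro x hx
  by_contra hcon
  push_neg at hcon
  have hxV : x ∉ V := by
    intro hxV
    have := hcon x hxV
    simp [dist_self] at this
    linarith
  have hPV' : P (insert x V) := by
    constructor
    · intro y hy
      simp only [Finset.coe_insert, Set.mem_insert_iff] at hy
      rcases hy with rfl | hy
      · exact hx
      · exact hPV.1 hy
    · intro u hu v hv huv
      simp only [Finset.mem_insert] at hu hv
      rcases hu with rfl | hu <;> rcases hv with rfl | hv
      · exact absurd rfl huv
      · exact hcon v hv
      · rw [dist_comm]
        exact hcon u hu
      · exact hPV.2 u hu v hv huv
  have : (insert x V).card ∈ A := ⟨_, hPV', rfl⟩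
  have hle := le_csSup hAbdd this
  rw [Finset.card_insert_of_notMem hxV, hVcard] at hle
  omega






theorem measure_count_bound (m : ℕ) (hm : 1 ≤ m) {δ : ℝ} (hδ : 0 < δ)
    (V : Finset (EuclideanSpace ℝ (Fin (m+1))))
    (hcov : ∀ x : EuclideanSpace ℝ (Fin (m+1)), WithLp.ofLp x ∈ stdSimplex ℝ (Fin (m+1)) →
      ∃ v ∈ V, dist x v < δ)
    (hVK : ∀ v ∈ V, WithLp.ofLp v ∈ stdSimplex ℝ (Fin (m+1))) :
    (1:ℝ) / m.factorial ≤ (V.card : ℝ) *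
      ((Real.sqrt ((m:ℝ)+1))⁻¹ * (δ^m * (Real.sqrt Real.pi ^ m / Real.Gamma ((m:ℝ)/2 + 1)))) := by
  classical
  haveI : Nonempty (Fin m) := ⟨⟨0, hm⟩⟩
  set sd : ℝ := Real.sqrt ((m:ℝ)+1) with hsddef
  have hsd : (1:ℝ) ≤ sd := by
    rw [hsddef]
    have h1 : (1:ℝ) ≤ (m:ℝ)+1 := by
      have : (1:ℝ) ≤ m := by exact_mod_cast hm
      linarith
    calc (1:ℝ) = Real.sqrt 1 := Real.sqrt_one.symm
      _ ≤ Real.sqrt ((m:ℝ)+1) := Real.sqrt_le_sqrt h1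
  have hsd0 : (0:ℝ) < sd := by linarith
  have hm0 : (0:ℝ) < m := by exact_mod_cast hm
  have hsq : sd ^ 2 = (m:ℝ)+1 := Real.sq_sqrt (by positivity)
  set c : ℝ := (sd - 1) / m with hc
  have hcm : c * m = sd - 1 := by rw [hc]; field_simp
  have hcc : 2*c + c^2*m = 1 := by
    rw [hc]
    field_simp
    first
    | linear_combination (m:ℝ) * hsq
    | linear_combination hsq
    | linear_combination (m:ℝ)^2 * hsq
    | linear_combination (m:ℝ)^3 * hsq
    | nlinarith [hsq]
  have hdet : LinearMap.det (Tmap m c) = sd := by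
    rw [Tmap_det, hcm]; ring
  -- the projection
  set p : EuclideanSpace ℝ (Fin (m+1)) → EuclideanSpace ℝ (Fin m) :=
    fun x => WithLp.toLp 2 (fun i : Fin m => x i.castSucc) with hp
  set S : Set (EuclideanSpace ℝ (Fin m)) := {y | (∀ i, 0 ≤ y i) ∧ ∑ i, y i ≤ 1} with hS
  set B : EuclideanSpace ℝ (Fin (m+1)) → Set (EuclideanSpace ℝ (Fin m)) :=
    fun v => (fun y => Tmap m c (y - p v)) ⁻¹' (Metric.ball (0 : EuclideanSpace ℝ (Fin m)) δ)
    with hB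
  have hScov : S ⊆ ⋃ v ∈ V, B v := by
    intro y hy
    obtain ⟨hy0, hy1⟩ := hy
    set x : EuclideanSpace ℝ (Fin (m+1)) := WithLp.toLp 2 (Fin.snoc (α := fun _ => ℝ) y.ofLp (1 - ∑ i, y i)) with hx
    have hxsimplex : WithLp.ofLp x ∈ stdSimplex ℝ (Fin (m+1)) := by
      constructor
      · intro i
        induction i using Fin.lastCases with
        | last => rw [hx]; simp only [Fin.snoc_last]; linarith
        | cast j => rw [hx]; simp only [Fin.snoc_castSucc]; exact hy0 j
      · rw [Fin.sum_univ_castSucc, hx]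
        simp only [Fin.snoc_last, Fin.snoc_castSucc]
        ring
    obtain ⟨v, hvV, hvx⟩ := hcov x hxsimplex
    have hvsimplex := hVK v hvV
    refine Set.mem_iUnion.2 ⟨v, Set.mem_iUnion.2 ⟨hvV, ?_⟩⟩
    rw [hB]
    simp only [Set.mem_preimage, mem_ball_zero_iff]
    have hsum : ∑ i : Fin m, (y - p v) i = - (x (Fin.last m) - v (Fin.last m)) := by
      have h1 : ∑ i : Fin (m+1), x i = 1 := hxsimplex.2
      have h2 : ∑ i : Fin (m+1), v i = 1 := hvsimplex.2
      rw [Fin.sum_univ_castSucc] at h1 h2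
      have : ∑ i : Fin m, (y - p v) i = ∑ i : Fin m, (x i.castSucc - v i.castSucc) := by
        apply Finset.sum_congr rfl
        intro i _
        simp only [PiLp.sub_apply, hp]
        rw [hx]; simp [Fin.snoc_castSucc]
      rw [this, Finset.sum_sub_distrib]
      linarith
    have hnorm : ‖y - p v‖^2 = ∑ i : Fin m, (x i.castSucc - v i.castSucc)^2 := by
      rw [EuclideanSpace.norm_eq, Real.sq_sqrt (Finset.sum_nonneg fun i _ => sq_nonneg _)]
      apply Finset.sum_congr rfl
      intro i _
      rw [Real.norm_eq_abs, sq_abs]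
      congr 1
      simp only [PiLp.sub_apply, hp]
      rw [hx]; simp [Fin.snoc_castSucc]
    have hnormsq : ‖Tmap m c (y - p v)‖^2 = dist x v ^2 := by
      rw [Tmap_norm_sq m c hcc, hsum]
      rw [EuclideanSpace.dist_eq, Real.sq_sqrt (Finset.sum_nonneg fun i _ => sq_nonneg _)]
      simp only [Real.dist_eq, sq_abs]
      rw [hnorm, Fin.sum_univ_castSucc]
      ring
    have hd2 : ‖Tmap m c (y - p v)‖^2 < δ^2 := by
      rw [hnormsq]
      have h0 : (0:ℝ) ≤ dist x v := dist_nonneg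
      nlinarith
    nlinarith [norm_nonneg (Tmap m c (y - p v))]
  -- measure of S
  have hmeasS : volume S = ENNReal.ofReal (1 / m.factorial) := by
    have hSpi : MeasurableSet {x : Fin m → ℝ | (∀ i, 0 ≤ x i) ∧ ∑ i, x i ≤ 1} := by
      apply MeasurableSet.inter
      · show MeasurableSet {x : Fin m → ℝ | ∀ i, 0 ≤ x i}
        rw [Set.setOf_forall]
        exact MeasurableSet.iInter fun i =>
          measurableSet_le measurable_const (measurable_pi_apply i)
      · exact measurableSet_le (Finset.univ.measurable_sum fun i _ => measurable_pi_apply i)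
          measurable_const
    have h1 := (EuclideanSpace.volume_preserving_symm_measurableEquiv_toLp (Fin m)).measure_preimage
      hSpi.nullMeasurableSet
    have hpre : (MeasurableEquiv.toLp 2 (Fin m → ℝ)).symm ⁻¹'
        {x : Fin m → ℝ | (∀ i, 0 ≤ x i) ∧ ∑ i, x i ≤ 1} = S := rfl
    rw [hpre] at h1
    rw [h1, volume_corner m 1 (by norm_num)]
    norm_num
  -- measure of each B v
  have hmeasB : ∀ v, volume (B v) =
      ENNReal.ofReal sd⁻¹ * volume (Metric.ball (0 : EuclideanSpace ℝ (Fin m)) δ) := by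
    intro v
    have hfun : (fun y => Tmap m c (y - p v)) =
        (⇑(Tmap m c)) ∘ (fun y => y + (- p v)) := by
      funext y; simp [sub_eq_add_neg]
    rw [hB]
    simp only
    rw [hfun, Set.preimage_comp, measure_preimage_add_right,
      Measure.addHaar_preimage_linearMap volume (by rw [hdet]; positivity),
      hdet, abs_of_pos (by positivity)]
  -- volume of the ball
  have hball : volume (Metric.ball (0 : EuclideanSpace ℝ (Fin m)) δ)
      = ENNReal.ofReal (δ^m * (Real.sqrt Real.pi ^ m / Real.Gamma ((m:ℝ)/2 + 1))) := by
    rw [EuclideanSpace.volume_ball]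
    simp only [Fintype.card_fin]
    rw [← ENNReal.ofReal_pow hδ.le, ← ENNReal.ofReal_mul (by positivity)]
  have hG : 0 < Real.Gamma ((m:ℝ)/2 + 1) := Real.Gamma_pos_of_pos (by positivity)
  -- chain
  have hchain : ENNReal.ofReal ((1:ℝ) / m.factorial) ≤ ENNReal.ofReal ((V.card : ℝ) *
      (sd⁻¹ * (δ^m * (Real.sqrt Real.pi ^ m / Real.Gamma ((m:ℝ)/2 + 1))))) := by
    rw [← hmeasS]
    calc volume S ≤ volume (⋃ v ∈ V, B v) := measure_mono hScov
      _ ≤ ∑ v ∈ V, volume (B v) := measure_biUnion_finset_le V B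
      _ = V.card * (ENNReal.ofReal sd⁻¹ *
          volume (Metric.ball (0 : EuclideanSpace ℝ (Fin m)) δ)) := by
          rw [Finset.sum_congr rfl (fun v _ => hmeasB v), Finset.sum_const, nsmul_eq_mul]
      _ = ENNReal.ofReal ((V.card : ℝ) *
          (sd⁻¹ * (δ^m * (Real.sqrt Real.pi ^ m / Real.Gamma ((m:ℝ)/2 + 1))))) := by
          rw [hball, ← ENNReal.ofReal_mul (by positivity),
            ← ENNReal.ofReal_natCast V.card, ← ENNReal.ofReal_mul (by positivity)]
  exact (ENNReal.ofReal_le_ofReal_iff (by positivity)).1 hchain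

end Aux

section Aux2




lemma packingRadius_pos (d : ℕ) (hd : 2 ≤ d) : 0 < packingRadius d := by
  have hd0 : (0:ℝ) < d := by exact_mod_cast (by omega : 0 < d)
  have h1 : (0:ℝ) < Real.sqrt (Real.exp 1) / (2 * Real.sqrt (Real.pi * d)) := by positivity
  have h2 : (0:ℝ) < (Real.sqrt d / 3) ^ ((1 : ℝ) / ((d : ℝ) - 1)) :=
    Real.rpow_pos_of_pos (by positivity) _
  have h3 : (0:ℝ) < (1 / Real.sqrt 2) ^ ((d : ℝ) / ((d : ℝ) - 1)) :=
    Real.rpow_pos_of_pos (by positivity) _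
  unfold packingRadius
  positivity

lemma key_ineq (m : ℕ) (hm : 1 ≤ m) :
    2^(m+1) * (m.factorial : ℝ) * (packingRadius (m+1))^m * Real.sqrt Real.pi ^ m
      < Real.sqrt ((m:ℝ)+1) * Real.Gamma ((m:ℝ)/2 + 1) := by
  have hm0 : (0:ℝ) < m := by exact_mod_cast hm
  have hm1 : (1:ℝ) ≤ m := by exact_mod_cast hm
  set x : ℝ := (m:ℝ) + 1 with hxdef
  have hx2 : (2:ℝ) ≤ x := by linarith
  have hx0 : (0:ℝ) < x := by linarith
  have hcast : ((m+1:ℕ):ℝ) = x := by push_cast; ring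
  have hsx : (0:ℝ) < Real.sqrt x := Real.sqrt_pos.2 hx0
  have hsp : (0:ℝ) < Real.sqrt Real.pi := Real.sqrt_pos.2 Real.pi_pos
  have hse : (0:ℝ) < Real.sqrt (Real.exp 1) := Real.sqrt_pos.2 (Real.exp_pos 1)
  have hs2 : (0:ℝ) < Real.sqrt 2 := Real.sqrt_pos.2 (by norm_num)
  -- unfold the packing radius
  have hpr : packingRadius (m+1) = Real.sqrt (Real.exp 1) / (2 * Real.sqrt (Real.pi * x))
      * (Real.sqrt x / 3) ^ ((1 : ℝ) / (m:ℝ))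
      * (1 / Real.sqrt 2) ^ (x / (m:ℝ)) := by
    unfold packingRadius
    rw [hcast]
    congr 2
    · congr 1
      rw [show x - 1 = (m:ℝ) from by rw [hxdef]; ring]
    · rw [show x - 1 = (m:ℝ) from by rw [hxdef]; ring]
  -- powers
  have hA : ((Real.sqrt x / 3) ^ ((1 : ℝ) / (m:ℝ)))^m = Real.sqrt x / 3 := by
    rw [← Real.rpow_natCast ((Real.sqrt x / 3) ^ ((1 : ℝ) / (m:ℝ))) m,
      ← Real.rpow_mul (by positivity), one_div, inv_mul_cancel₀ (ne_of_gt hm0), Real.rpow_one]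
  have hB : ((1 / Real.sqrt 2) ^ (x / (m:ℝ)))^m = (1 / Real.sqrt 2) ^ x := by
    rw [← Real.rpow_natCast ((1 / Real.sqrt 2) ^ (x / (m:ℝ))) m,
      ← Real.rpow_mul (by positivity), div_mul_cancel₀ _ (ne_of_gt hm0)]
  have hδm : (packingRadius (m+1))^m =
      (Real.sqrt (Real.exp 1) / (2 * Real.sqrt (Real.pi * x)))^m
        * (Real.sqrt x / 3) * ((1 / Real.sqrt 2) ^ x) := by
    rw [hpr, mul_pow, mul_pow, hA, hB]
  -- combine the √π^m factor
  have hcomb : (Real.sqrt (Real.exp 1) / (2 * Real.sqrt (Real.pi * x)))^m * Real.sqrt Real.pi ^ m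
      = (Real.sqrt (Real.exp 1) / (2 * Real.sqrt x))^m := by
    rw [← mul_pow]
    congr 1
    rw [Real.sqrt_mul Real.pi_pos.le]
    field_simp
  -- state both sides
  set LHS : ℝ := 2^(m+1) * (m.factorial : ℝ) * (packingRadius (m+1))^m * Real.sqrt Real.pi ^ m
    with hLHS
  have hLHS' : LHS = 2^(m+1) * (m.factorial : ℝ)
      * ((Real.sqrt (Real.exp 1) / (2 * Real.sqrt x))^m * (Real.sqrt x / 3)
        * ((1 / Real.sqrt 2) ^ x)) := by
    rw [hLHS, hδm, ← hcomb]; ring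
  have hfac : (0:ℝ) < (m.factorial : ℝ) := by exact_mod_cast m.factorial_pos
  have hLHSpos : 0 < LHS := by
    rw [hLHS']
    have := Real.rpow_pos_of_pos (show (0:ℝ) < 1/Real.sqrt 2 by positivity) x
    positivity
  have hG : (0:ℝ) < Real.Gamma ((m:ℝ)/2 + 1) := Real.Gamma_pos_of_pos (by positivity)
  have hGx : (0:ℝ) < Real.Gamma (x/2) := Real.Gamma_pos_of_pos (by positivity)
  have hRHSpos : (0:ℝ) < Real.sqrt x * Real.Gamma ((m:ℝ)/2 + 1) := by positivity
  rw [show Real.sqrt ((m:ℝ)+1) = Real.sqrt x by rw [hxdef]]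
  rw [← Real.log_lt_log_iff hLHSpos hRHSpos]
  -- log abbreviations
  set l2 : ℝ := Real.log 2 with hl2
  set lx : ℝ := Real.log x with hlx
  set lp : ℝ := Real.log Real.pi with hlp
  set l3 : ℝ := Real.log 3 with hl3
  set lg : ℝ := Real.log (Real.Gamma (x/2)) with hlg
  set lG : ℝ := Real.log (Real.Gamma ((m:ℝ)/2 + 1)) with hlG
  set lf : ℝ := Real.log (m.factorial : ℝ) with hlf
  -- log facts
  have hlogsqrtx : Real.log (Real.sqrt x) = lx/2 := by
    rw [Real.log_sqrt hx0.le]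
  have hlogsqrtp : Real.log (Real.sqrt Real.pi) = lp/2 := by
    rw [Real.log_sqrt Real.pi_pos.le]
  have hlogsqrte : Real.log (Real.sqrt (Real.exp 1)) = 1/2 := by
    rw [Real.log_sqrt (Real.exp_pos 1).le, Real.log_exp]
  have hlogsqrt2 : Real.log (Real.sqrt 2) = l2/2 := by
    rw [Real.log_sqrt (by norm_num : (0:ℝ) ≤ 2)]
  -- expand log LHS
  have hlog1 : Real.log ((2:ℝ)^(m+1)) = x * l2 := by
    rw [Real.log_pow, hl2, hxdef]; push_cast; ring
  have hlog2 : Real.log ((Real.sqrt (Real.exp 1) / (2 * Real.sqrt x))^m)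
      = (m:ℝ)/2 - (m:ℝ)*l2 - (m:ℝ)*lx/2 := by
    rw [Real.log_pow, Real.log_div (ne_of_gt hse) (by positivity),
      Real.log_mul (by norm_num) (ne_of_gt hsx), hlogsqrte, hlogsqrtx]
    ring
  have hlog3 : Real.log (Real.sqrt x / 3) = lx/2 - l3 := by
    rw [Real.log_div (ne_of_gt hsx) (by norm_num), hlogsqrtx, hl3]
  have hlog4 : Real.log ((1 / Real.sqrt 2) ^ x) = -(x * l2)/2 := by
    rw [Real.log_rpow (by positivity), one_div, Real.log_inv, hlogsqrt2]
    ring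
  have hlogLHS : Real.log LHS = x*l2 + lf + (((m:ℝ)/2 - (m:ℝ)*l2 - (m:ℝ)*lx/2) + (lx/2 - l3)
      + -(x * l2)/2) := by
    rw [hLHS']
    rw [Real.log_mul (by positivity) (by positivity),
      Real.log_mul (by positivity) (by positivity)]
    rw [hlog1]
    congr 1
    rw [Real.log_mul (by positivity) (by positivity),
      Real.log_mul (by positivity) (by positivity)]
    rw [hlog2, hlog3, hlog4]
  have hlogRHS : Real.log (Real.sqrt x * Real.Gamma ((m:ℝ)/2 + 1)) = lx/2 + lG := by
    rw [Real.log_mul (ne_of_gt hsx) (ne_of_gt hG), hlogsqrtx]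
  -- duplication formula
  have hdup : lg + lG = lf + (1-x)*l2 + lp/2 := by
    have h := Real.Gamma_mul_Gamma_add_half (x/2)
    rw [show 2*(x/2) = x by ring] at h
    rw [show x/2 + 1/2 = (m:ℝ)/2 + 1 by rw [hxdef]; ring] at h
    rw [show x = (m:ℝ)+1 by rw [hxdef]] at h
    rw [Real.Gamma_nat_eq_factorial m] at h
    rw [show (m:ℝ)+1 = x by rw [hxdef]] at h
    have hlogh := congrArg Real.log h
    rw [Real.log_mul (ne_of_gt hGx) (ne_of_gt hG)] at hlogh
    rw [Real.log_mul (by positivity) (ne_of_gt hsp)] at hlogh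
    rw [Real.log_mul (ne_of_gt hfac) (ne_of_gt (Real.rpow_pos_of_pos (by norm_num) _))] at hlogh
    rw [Real.log_rpow (by norm_num : (0:ℝ) < 2), hlogsqrtp] at hlogh
    rw [← hlg, ← hlG, ← hlf, ← hl2] at hlogh
    ring_nf at hlogh ⊢
    linarith [hlogh]
  -- Gfun bound
  have hGfun : lg + x*l2/2 + x/2 - x*lx/2 + lx/2 < l3 + lp/2 + 1/2 := by
    have h := Gfun_lt (m+1) (by omega)
    unfold Gfun at h
    rw [hcast] at h
    have hb : (0:ℝ) < 2*Real.exp 1/x := by positivity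
    have hlhs : 0 < Real.Gamma (x/2) * (2*Real.exp 1/x) ^ (x/2) * Real.sqrt x := by
      have := Real.rpow_pos_of_pos hb (x/2)
      positivity
    have hrhs : (0:ℝ) < 3 * Real.sqrt (Real.pi * Real.exp 1) := by positivity
    rw [← Real.log_lt_log_iff hlhs hrhs] at h
    rw [Real.log_mul (by positivity) (ne_of_gt hsx),
      Real.log_mul (ne_of_gt hGx) (ne_of_gt (Real.rpow_pos_of_pos hb _)),
      Real.log_rpow hb,
      Real.log_div (by positivity) (ne_of_gt hx0),
      Real.log_mul (by norm_num) (ne_of_gt (Real.exp_pos 1)), Real.log_exp,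
      hlogsqrtx, Real.log_mul (by norm_num : (3:ℝ) ≠ 0)
        (ne_of_gt (Real.sqrt_pos.2 (by positivity))),
      Real.log_sqrt (by positivity),
      Real.log_mul (ne_of_gt Real.pi_pos) (ne_of_gt (Real.exp_pos 1)), Real.log_exp] at h
    rw [← hlg, ← hl2, ← hlx, ← hl3, ← hlp] at h
    ring_nf at h ⊢
    linarith [h]
  rw [hlogLHS, hlogRHS]
  -- auxiliary product relations
  have hmr : (m:ℝ) = x - 1 := by rw [hxdef]; ring
  have hml2 : (m:ℝ)*l2 = x*l2 - l2 := by rw [hmr]; ring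
  have hmlx : (m:ℝ)*lx = x*lx - lx := by rw [hmr]; ring
  ring_nf at hdup hGfun hml2 hmlx ⊢
  linarith [hdup, hGfun, hml2, hmlx, hmr]








-- lower bound on the packing radius
lemma packingRadius_lower (d : ℕ) (hd : 2 ≤ d) :
    Real.sqrt (2 * Real.exp 1) / (12 * Real.sqrt (Real.pi * d)) ≤ packingRadius d := by
  have hd0 : (0:ℝ) < d := by exact_mod_cast (by omega : 0 < d)
  have hd2 : (2:ℝ) ≤ d := by exact_mod_cast hd
  have hm1 : (1:ℝ) ≤ (d:ℝ) - 1 := by linarith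
  have hm0 : (0:ℝ) < (d:ℝ) - 1 := by linarith
  have hsd : Real.sqrt 2 ≤ Real.sqrt d := Real.sqrt_le_sqrt hd2
  have hs2 : (0:ℝ) < Real.sqrt 2 := Real.sqrt_pos.2 (by norm_num)
  have hs2' : (1:ℝ) ≤ Real.sqrt 2 := by
    rw [show (1:ℝ) = Real.sqrt 1 from Real.sqrt_one.symm]
    exact Real.sqrt_le_sqrt (by norm_num)
  have hsd0 : (0:ℝ) < Real.sqrt d := by linarith
  set a : ℝ := Real.sqrt (Real.exp 1) / (2 * Real.sqrt (Real.pi * d)) with ha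
  have ha0 : 0 < a := by rw [ha]; positivity
  -- A ≥ √2/3
  have hA : Real.sqrt 2 / 3 ≤ (Real.sqrt d / 3) ^ ((1 : ℝ) / ((d : ℝ) - 1)) := by
    rcases le_or_gt 3 (Real.sqrt d) with h3 | h3
    · have h1 : (1:ℝ) ≤ Real.sqrt d / 3 := by linarith
      have := Real.one_le_rpow h1 (by positivity : (0:ℝ) ≤ (1 : ℝ) / ((d : ℝ) - 1))
      have h2 : Real.sqrt 2 / 3 ≤ 1 := by
        rw [div_le_one (by norm_num : (0:ℝ) < 3)]
        calc Real.sqrt 2 ≤ Real.sqrt 9 := Real.sqrt_le_sqrt (by norm_num)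
          _ = 3 := by
            rw [show (9:ℝ) = 3^2 by norm_num, Real.sqrt_sq (by norm_num : (0:ℝ) ≤ 3)]
      linarith
    · have hb0 : (0:ℝ) < Real.sqrt d / 3 := by positivity
      have hb1 : Real.sqrt d / 3 ≤ 1 := by
        rw [div_le_one (by norm_num : (0:ℝ) < 3)]; linarith
      have hexp : (1 : ℝ) / ((d : ℝ) - 1) ≤ 1 := by
        rw [div_le_one hm0]; linarith
      have := Real.rpow_le_rpow_of_exponent_ge hb0 hb1 hexp
      rw [Real.rpow_one] at this
      calc Real.sqrt 2 / 3 ≤ Real.sqrt d / 3 := by linarith [hsd]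
        _ ≤ _ := this
  -- B ≥ 1/2
  have hB : (1:ℝ)/2 ≤ (1 / Real.sqrt 2) ^ ((d : ℝ) / ((d : ℝ) - 1)) := by
    have hb0 : (0:ℝ) < 1 / Real.sqrt 2 := by positivity
    have hb1 : 1 / Real.sqrt 2 ≤ 1 := by
      rw [div_le_one hs2]; exact hs2'
    have hexp : (d : ℝ) / ((d : ℝ) - 1) ≤ 2 := by
      rw [div_le_iff₀ hm0]; linarith
    have := Real.rpow_le_rpow_of_exponent_ge hb0 hb1 hexp
    have hhalf : ((1:ℝ) / Real.sqrt 2) ^ (2:ℝ) = 1/2 := by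
      have h2n : ((1:ℝ)/Real.sqrt 2) ^ (2:ℝ) = ((1:ℝ)/Real.sqrt 2) ^ (2:ℕ) := by
        rw [← Real.rpow_natCast ((1:ℝ)/Real.sqrt 2) 2]
        norm_num
      rw [h2n, div_pow, one_pow, Real.sq_sqrt (by norm_num : (0:ℝ) ≤ 2)]
    calc (1:ℝ)/2 = (1 / Real.sqrt 2) ^ (2:ℝ) := hhalf.symm
      _ ≤ _ := this
  -- combine
  have hApos : (0:ℝ) < (Real.sqrt d / 3) ^ ((1 : ℝ) / ((d : ℝ) - 1)) :=
    Real.rpow_pos_of_pos (by positivity) _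
  have hBpos : (0:ℝ) < (1 / Real.sqrt 2) ^ ((d : ℝ) / ((d : ℝ) - 1)) :=
    Real.rpow_pos_of_pos (by positivity) _
  have hchain : a * (Real.sqrt 2 / 3) * ((1:ℝ)/2) ≤ packingRadius d := by
    unfold packingRadius
    rw [← ha]
    apply mul_le_mul
    · apply mul_le_mul_of_nonneg_left hA ha0.le
    · exact hB
    · norm_num
    · positivity
  calc Real.sqrt (2 * Real.exp 1) / (12 * Real.sqrt (Real.pi * d))
      = a * (Real.sqrt 2 / 3) * ((1:ℝ)/2) := by
        rw [ha, Real.sqrt_mul (by norm_num : (0:ℝ) ≤ 2)]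
        field_simp
        ring
    _ ≤ packingRadius d := hchain

-- compactness of the simplex in Euclidean space
lemma isCompact_simplex_euclid (d : ℕ) :
    IsCompact (WithLp.ofLp ⁻¹' stdSimplex ℝ (Fin d) : Set (EuclideanSpace ℝ (Fin d))) := by
  have h := isCompact_stdSimplex ℝ (Fin d)
  have himg := h.image (PiLp.continuousLinearEquiv 2 ℝ (fun _ : Fin d => ℝ)).symm.continuous
  convert himg using 1
  ext x
  constructor
  · intro hx
    exact ⟨x.ofLp, hx, rfl⟩
  · rintro ⟨y, hy, rfl⟩
    exact hy

theorem simplex_packing_number' (d : ℕ) (hd : 2 ≤ d) :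
    Real.sqrt (2 * Real.exp 1) / (12 * Real.sqrt (Real.pi * d)) ≤ packingRadius d ∧
    ∃ V : Finset (Fin d → ℝ),
      (↑V : Set (Fin d → ℝ)) ⊆ stdSimplex ℝ (Fin d) ∧
      2 ^ d < V.card ∧
      ∀ u ∈ V, ∀ v ∈ V, u ≠ v →
        packingRadius d ≤ Real.sqrt (∑ i, (u i - v i) ^ 2) := by
  refine ⟨packingRadius_lower d hd, ?_⟩
  obtain ⟨m, rfl⟩ : ∃ m, d = m + 1 := ⟨d - 1, by omega⟩
  have hm : 1 ≤ m := by omega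
  have hδ : 0 < packingRadius (m+1) := packingRadius_pos (m+1) hd
  obtain ⟨V, hVK, hsep, hcov⟩ :=
    exists_maximal_packing (E := EuclideanSpace ℝ (Fin (m+1))) (isCompact_simplex_euclid (m+1)) hδ
  have hdist : ∀ u v : EuclideanSpace ℝ (Fin (m+1)),
      dist u v = Real.sqrt (∑ i, (u i - v i) ^ 2) := by
    intro u v
    rw [EuclideanSpace.dist_eq]
    congr 1
    apply Finset.sum_congr rfl
    intro i _
    rw [Real.dist_eq, sq_abs]
  refine ⟨V.image WithLp.ofLp, ?_, ?_, ?_⟩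
  · intro w hw
    obtain ⟨v, hv, rfl⟩ := Finset.mem_image.1 hw
    exact hVK hv
  · -- cardinality
    by_contra hcard
    push_neg at hcard
    rw [Finset.card_image_of_injective _ (WithLp.ofLp_injective 2)] at hcard
    have hcardR : (V.card : ℝ) ≤ 2^(m+1) := by
      calc (V.card : ℝ) ≤ ((2^(m+1) : ℕ) : ℝ) := by exact_mod_cast hcard
        _ = 2^(m+1) := by push_cast; ring
    have hbound := measure_count_bound m hm hδ V (fun x hx => hcov x hx) (fun v hv => hVK hv)
    set Q : ℝ := (Real.sqrt ((m:ℝ)+1))⁻¹ *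
      ((packingRadius (m+1))^m * (Real.sqrt Real.pi ^ m / Real.Gamma ((m:ℝ)/2 + 1))) with hQ
    have hG : (0:ℝ) < Real.Gamma ((m:ℝ)/2 + 1) := Real.Gamma_pos_of_pos (by positivity)
    have hsx : (0:ℝ) < Real.sqrt ((m:ℝ)+1) := Real.sqrt_pos.2 (by positivity)
    have hQ0 : 0 ≤ Q := by rw [hQ]; positivity
    have hfac : (0:ℝ) < (m.factorial : ℝ) := by exact_mod_cast m.factorial_pos
    have hkey := key_ineq m hm
    have h2 : (2:ℝ)^(m+1) * Q < 1/(m.factorial : ℝ) := by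
      rw [lt_div_iff₀ hfac]
      have e1 : (2:ℝ)^(m+1) * Q * (m.factorial : ℝ)
          = (2^(m+1) * (m.factorial : ℝ) * (packingRadius (m+1))^m * Real.sqrt Real.pi ^ m)
            / (Real.sqrt ((m:ℝ)+1) * Real.Gamma ((m:ℝ)/2 + 1)) := by
        rw [hQ]; field_simp
      rw [e1, div_lt_one (by positivity)]
      exact hkey
    have h3 : (1:ℝ)/(m.factorial : ℝ) ≤ (V.card : ℝ) * Q := hbound
    have h4 : (V.card : ℝ) * Q ≤ 2^(m+1) * Q := mul_le_mul_of_nonneg_right hcardR hQ0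
    linarith
  · intro u' hu' v' hv' huv'
    obtain ⟨u, hu, rfl⟩ := Finset.mem_image.1 hu'
    obtain ⟨v, hv, rfl⟩ := Finset.mem_image.1 hv'
    have huv : u ≠ v := fun h => huv' (h ▸ rfl)
    have := hsep u hu v hv huv
    rw [hdist u v] at this
    exact this

end Aux2

/-- **Lemma (packing number of the probability simplex).** For `d ≥ 2`, the `δ₀`-packing number
of `Δ^{d−1}` under the Euclidean distance is strictly greater than `2^d`, and
`δ₀ ≥ √(2e)/(12√(πd))`. -/
theorem simplex_packing_number (d : ℕ) (hd : 2 ≤ d) :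
    Real.sqrt (2 * Real.exp 1) / (12 * Real.sqrt (Real.pi * d)) ≤ packingRadius d ∧
    ∃ V : Finset (Fin d → ℝ),
      (↑V : Set (Fin d → ℝ)) ⊆ stdSimplex ℝ (Fin d) ∧
      2 ^ d < V.card ∧
      ∀ u ∈ V, ∀ v ∈ V, u ≠ v →
        packingRadius d ≤ Real.sqrt (∑ i, (u i - v i) ^ 2) := by
  exact simplex_packing_number' d hd

end
end

section
/- There exists a universal constant c > 0 such that for every d ≥ 2, every n ∈ ℕ, and every sequence of contexts x^{(1)},…,x^{(n)} ∈ 𝒳 for which 𝒳 ∖ {x^{(1)},…,x^{(n)}} is nonempty, the minimax risk for estimating the contextual CDF in uniform Kolmogorov–Smirnov distance over instances with degenerate design satisfies: inf_{F̂} sup_{ (θ,Φ) ∈ Δ^{d−1} × 𝔅_d with μ_min(U_n^Φ) = 0 } E_{(y^{(1)},…,y^{(n)}) ∼ ⊗_{j=1}^n P^Φ_{Y|x^{(j)};θ}} [ sup_{x ∈ 𝒳, t ∈ ℝ} | F̂(y^{(1)},…,y^{(n)})(x,t) − θᵀΦ(x,t) | ] ≥ c, where the infimum is over all measurable estimators F̂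 mapping the data to a contextual CDF, S = [0,1], and 𝔪 is the Lebesgue measure on [0,1]. -/
/-!
The data carry no information about a context that was never observed. Take every observed
context to emit a Dirac mass at `2`: its CDF vanishes on `[0,1]`, so the design matrix `U_n^Φ`
is zero, and the sample is almost surely the constant `2`. At an unobserved context `x₀` the law
is a Dirac mass whose location is chosen after seeing the estimator's value `p = F̂(2,…,2)(x₀,0)`:
at `-1` if `p ≤ 1/2`, at `2` otherwise. Either way `|p - F(x₀,0)| ≥ 1/2`.
-/

open MeasureTheory ProbabilityTheory Finset Matrix

noncomputable section

/-- Smallest eigenvalue of a (symmetric) real matrix, characterized via the Rayleigh quotient. -/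
def muMin {d : ℕ} (A : Matrix (Fin d) (Fin d) ℝ) : ℝ :=
  sInf {r : ℝ | ∃ v : Fin d → ℝ, (∑ i, v i ^ 2) = 1 ∧ r = v ⬝ᵥ A.mulVec v}

open Set

lemma muMin_zero {d : ℕ} [NeZero d] : muMin (0 : Matrix (Fin d) (Fin d) ℝ) = 0 := by
  have hset : {r : ℝ | ∃ v : Fin d → ℝ, (∑ i, v i ^ 2) = 1 ∧
      r = v ⬝ᵥ (0 : Matrix (Fin d) (Fin d) ℝ).mulVec v} = {0} := by
    ext r
    simp only [zero_mulVec, dotProduct_zero, mem_ofPred_eq, mem_singleton_iff]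
    exact ⟨fun ⟨_, _, hr⟩ => hr,
      fun hr => ⟨Pi.single 0 1, by simp [Pi.single_apply, ite_pow], hr⟩⟩
  rw [muMin, hset, csInf_singleton]

lemma muMin_gram_eq_zero_of_forall_eq_zero {ι : Type*} {d : ℕ} [NeZero d] {s : Finset ι}
    {S : Set ℝ} {μ : Measure ℝ} (φ : ι → ℝ → Fin d → ℝ)
    (hφ : ∀ j ∈ s, ∀ t ∈ S, ∀ i, φ j t i = 0) :
    muMin (Matrix.of fun i k => ∑ j ∈ s, ∫ t in S, φ j t i * φ j t k ∂μ) = 0 := by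
  convert muMin_zero (d := d)
  ext i k
  exact Finset.sum_eq_zero fun j hj =>
    setIntegral_eq_zero_of_forall_eq_zero fun t ht => by simp [hφ j hj t ht i]

lemma sum_mul_const_of_mem_stdSimplex {ι : Type*} [Fintype ι] {θ : ι → ℝ}
    (hθ : θ ∈ stdSimplex ℝ ι) (c : ℝ) : ∑ i, θ i * c = c := by
  rw [← Finset.sum_mul, hθ.2, one_mul]

lemma abs_sub_measureReal_le_one {α β : Type*} [MeasurableSpace α] [MeasurableSpace β]
    {μ : Measure α} {ν : Measure β} [IsProbabilityMeasure μ] [IsProbabilityMeasure ν]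
    (s : Set α) (s' : Set β) : |(μ s).toReal - (ν s').toReal| ≤ 1 :=
  abs_sub_le_of_nonneg_of_le ENNReal.toReal_nonneg measureReal_le_one
    ENNReal.toReal_nonneg measureReal_le_one

lemma dirac_setOf_forall_le {ι : Type*} [Fintype ι] (y t : ι → ℝ) :
    Measure.dirac y {z | ∀ j, z j ≤ t j} = ∏ j, Measure.dirac (y j) (Iic (t j)) := by
  simp [Measure.dirac_apply, indicator_apply, Finset.prod_ite_zero]

lemma dirac_Iic_toReal (b t : ℝ) : (Measure.dirac b (Iic t)).toReal = if b ≤ t then 1 else 0 := by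
  by_cases h : b ≤ t <;> simp [h]

lemma measurable_dirac_Iic_toReal {α : Type*} [MeasurableSpace α] {f : α → ℝ}
    (hf : Measurable f) : Measurable fun p : α × ℝ => (Measure.dirac (f p.1) (Iic p.2)).toReal := by
  simp only [dirac_Iic_toReal]
  exact Measurable.ite (measurableSet_le (hf.comp measurable_fst) measurable_snd)
    measurable_const measurable_const

lemma exists_half_le_abs_sub_dirac_Iic (p t : ℝ) :
    ∃ b : ℝ, 1 / 2 ≤ |p - (Measure.dirac b (Iic t)).toReal| := by
  by_cases hp : p ≤ 1 / 2
  · refine ⟨t - 1, ?_⟩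
    rw [dirac_Iic_toReal, if_pos (by linarith), abs_sub_comm]
    exact (le_abs_self _).trans' (by linarith)
  · refine ⟨t + 1, ?_⟩
    rw [dirac_Iic_toReal, if_neg (by linarith), sub_zero]
    exact (le_abs_self _).trans' (by linarith)

lemma le_ciSup_ciSup {α β : Type*} [Nonempty β] {f : α → β → ℝ} {C : ℝ}
    (hf : ∀ a b, f a b ≤ C) (a : α) (b : β) : f a b ≤ ⨆ a, ⨆ b, f a b :=
  (le_ciSup ⟨C, forall_mem_range.2 (hf a)⟩ b).trans
    (le_ciSup ⟨C, forall_mem_range.2 fun a => ciSup_le (hf a)⟩ a)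

/-- **Proposition (minimax lower bound for CDF estimation in uniform KS distance under
degenerate design).** For every `d ≥ 2`, contexts `x^{1:n}` avoiding at least one point of `𝒳`,
and every (measurable, CDF-valued) estimator `F̂`, there is an instance `(θ, Φ)` with
`μ_min(U_n^Φ) = 0` (with `S = [0,1]`, `𝔪 = Leb on [0,1]`) on which the expected uniform KS error
is at least a universal constant `c > 0`. -/
theorem minimax_lower_bound_KS_degenerate_design
    {X : Type*} [TopologicalSpace X] [PolishSpace X] [MeasurableSpace X] [BorelSpace X] :
    ∃ c : ℝ, 0 < c ∧
      ∀ (d n : ℕ), 2 ≤ d →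
      ∀ xs : ℕ → X, (∃ x0 : X, ∀ j ∈ Finset.Icc 1 n, x0 ≠ xs j) →
      ∀ Fhat : (Fin n → ℝ) → X → ℝ → ℝ,
        (∀ (x : X) (t : ℝ), Measurable fun ys => Fhat ys x t) →
        (∀ (ys : Fin n → ℝ) (x : X), ∃ μ : Measure ℝ, IsProbabilityMeasure μ ∧
          ∀ t : ℝ, Fhat ys x t = (μ (Set.Iic t)).toReal) →
      ∃ (θ : Fin d → ℝ) (Φ : X → ℝ → Fin d → ℝ) (Q : Measure (Fin n → ℝ)),
        θ ∈ stdSimplex ℝ (Fin d) ∧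
        (∀ i : Fin d, Measurable fun p : X × ℝ => Φ p.1 p.2 i) ∧
        (∀ (x : X) (i : Fin d), ∃ μ : Measure ℝ, IsProbabilityMeasure μ ∧
          ∀ t : ℝ, Φ x t i = (μ (Set.Iic t)).toReal) ∧
        muMin (Matrix.of fun i k => ∑ j ∈ Finset.Icc 1 n,
            ∫ t in Set.Icc (0:ℝ) 1, Φ (xs j) t i * Φ (xs j) t k) = 0 ∧
        IsProbabilityMeasure Q ∧
        (∀ ts : Fin n → ℝ, Q {ys | ∀ j, ys j ≤ ts j}
          = ∏ j : Fin n, ENNReal.ofReal (∑ i, θ i * Φ (xs ((j : ℕ) + 1)) (ts j) i)) ∧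
        ENNReal.ofReal c ≤
          ∫⁻ ys, ENNReal.ofReal
            (⨆ x : X, ⨆ t : ℝ, |Fhat ys x t - ∑ i, θ i * Φ x t i|) ∂Q := by
  classical
  refine ⟨1 / 2, by norm_num, fun d n hd xs ⟨x0, hx0⟩ Fhat _ hFcdf => ?_⟩
  have : NeZero d := ⟨by omega⟩
  let ys0 : Fin n → ℝ := fun _ => 2
  obtain ⟨b, hb⟩ := exists_half_le_abs_sub_dirac_Iic (Fhat ys0 x0 0) 0
  let loc : X → ℝ := fun x => if x = x0 then b else 2
  have hloc : ∀ j ∈ Finset.Icc 1 n, loc (xs j) = 2 := fun j hj => if_neg (hx0 j hj).symm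
  let θ : Fin d → ℝ := Pi.single 0 1
  have hθ : θ ∈ stdSimplex ℝ (Fin d) := single_mem_stdSimplex ℝ 0
  refine ⟨θ, fun x t _ => (Measure.dirac (loc x) (Iic t)).toReal, Measure.dirac ys0,
    hθ, fun _ => measurable_dirac_Iic_toReal (Measurable.ite (measurableSet_singleton x0)
      measurable_const measurable_const), fun x _ => ⟨_, inferInstance, fun _ => rfl⟩, ?_,
    inferInstance, fun ts => ?_, ?_⟩
  · refine muMin_gram_eq_zero_of_forall_eq_zero _ fun j hj t ht _ => ?_
    beta_reduce
    rw [hloc j hj, dirac_Iic_toReal, if_neg (by linarith [ht.2])]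
  · simp_rw [sum_mul_const_of_mem_stdSimplex hθ, ENNReal.ofReal_toReal (measure_ne_top _ _),
      hloc _ (Finset.mem_Icc.2 ⟨Nat.le_add_left 1 _, Nat.succ_le_of_lt (Fin.is_lt _)⟩)]
    exact dirac_setOf_forall_le ys0 ts
  · have hbound : ∀ x t, |Fhat ys0 x t - ∑ i, θ i *
        (Measure.dirac (loc x) (Iic t)).toReal| ≤ 1 := fun x t => by
      obtain ⟨μ, _, hμ⟩ := hFcdf ys0 x
      rw [hμ, sum_mul_const_of_mem_stdSimplex hθ]
      exact abs_sub_measureReal_le_one _ _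
    rw [lintegral_dirac]
    refine ENNReal.ofReal_le_ofReal ((le_ciSup_ciSup hbound x0 0).trans' ?_)
    simpa only [sum_mul_const_of_mem_stdSimplex hθ, loc, if_pos] using hb
end
end
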